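/- arXiv:1007.1363 — 3 statements merged into one kernel-verified Lean document; each statement's English description precedes it below -/
import Mathlib

section
/- Let n ≥ 1 and let α_1, …, α_n ∈ 𝔻 be pairwise distinct. Then there exists a constant A ∈ ℂ such that for every z ∈ ℂ with conj(α_j)·z ≠ 1 for all j, one has ζ_1(z)·ζ_2(z)⋯ζ_n(z) = A + Σ_{j=1}^{n} (conj(∏_{s≠j} ζ_s(α_j)))^{−1} · ζ_j(z). (The denominators are nonzero: since the α's are pairwise distinct points of 𝔻, ζ_s(α_j) ≠ 0 for s ≠ j.) -/
open Complex Finset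

noncomputable section

/-- The Blaschke factor `ζ_α(z) = (z - α)/(1 - conj(α)·z)`. -/
def blaschke (α z : ℂ) : ℂ := (z - α) / (1 - (starRingEnd ℂ) α * z)

lemma aux_ne (x y : ℂ) (hx : ‖x‖ < 1) (hy : ‖y‖ < 1) :
    1 - x * y ≠ 0 := by
  intro h
  have hxy : x * y = 1 := by linear_combination -h
  have := congrArg (‖·‖) hxy
  simp only [norm_mul, norm_one] at this
  nlinarith [norm_nonneg x, norm_nonneg y]

lemma conj_blaschke (a c : ℂ) :
    (starRingEnd ℂ) (blaschke a c)
      = ((starRingEnd ℂ) c - (starRingEnd ℂ) a) / (1 - a * (starRingEnd ℂ) c) := by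
  simp [blaschke, map_div₀]

lemma blaschke_inv_conj (a c : ℂ) (hc : (starRingEnd ℂ) c ≠ 0) (hne : a ≠ c)
    (ha1 : ‖a‖ < 1) (hc1 : ‖c‖ < 1) :
    blaschke a ((starRingEnd ℂ) c)⁻¹ = ((starRingEnd ℂ) (blaschke a c))⁻¹ := by
  have hd : 1 - a * (starRingEnd ℂ) c ≠ 0 := by
    apply aux_ne _ _ ha1; rwa [Complex.norm_conj]
  have h2 : (starRingEnd ℂ) c - (starRingEnd ℂ) a ≠ 0 := by
    rw [sub_ne_zero]
    exact fun h => hne ((starRingEnd ℂ).injective h).symm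
  rw [conj_blaschke]
  unfold blaschke
  rw [inv_div]
  field_simp

lemma blaschke_two (a c z : ℂ) (ha : ‖a‖ < 1) (hc : ‖c‖ < 1)
    (hne : a ≠ c) (h1 : (starRingEnd ℂ) a * z ≠ 1) (h2 : (starRingEnd ℂ) c * z ≠ 1) :
    blaschke a z * blaschke c z
      = (a * c + ((starRingEnd ℂ) (blaschke c a))⁻¹ * a
            + ((starRingEnd ℂ) (blaschke a c))⁻¹ * c)
        + ((starRingEnd ℂ) (blaschke c a))⁻¹ * blaschke a z
        + ((starRingEnd ℂ) (blaschke a c))⁻¹ * blaschke c z := by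
  rw [conj_blaschke, conj_blaschke]
  unfold blaschke
  set ab := (starRingEnd ℂ) a with hab
  set cb := (starRingEnd ℂ) c with hcb
  have hza : 1 - ab * z ≠ 0 := sub_ne_zero.2 fun h => h1 h.symm
  have hzc : 1 - cb * z ≠ 0 := sub_ne_zero.2 fun h => h2 h.symm
  have hca : 1 - c * ab ≠ 0 := by
    apply aux_ne _ _ hc; rwa [hab, Complex.norm_conj]
  have hac : 1 - a * cb ≠ 0 := by
    apply aux_ne _ _ ha; rwa [hcb, Complex.norm_conj]
  have habcb : ab - cb ≠ 0 := by
    rw [hab, hcb, sub_ne_zero]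
    exact fun h => hne ((starRingEnd ℂ).injective h)
  have hcbab : cb - ab ≠ 0 := fun h => habcb (by linear_combination -h)
  rw [inv_div, inv_div]
  have e1 : 1 - z * ab ≠ 0 := by rwa [mul_comm]
  have e2 : 1 - z * cb ≠ 0 := by rwa [mul_comm]
  field_simp
  ring

/-- Coefficient in the partial-fraction decomposition. -/
def coef (S : Finset ℂ) (a : ℂ) : ℂ :=
  ((starRingEnd ℂ) (∏ b ∈ S.erase a, blaschke b a))⁻¹

lemma key : ∀ (N : ℕ) (S : Finset ℂ), S.card = N → S.Nonempty →
    (∀ a ∈ S, ‖a‖ < 1) →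
    ∃ A : ℂ, ∀ z : ℂ, (∀ a ∈ S, (starRingEnd ℂ) a * z ≠ 1) →
      ∏ a ∈ S, blaschke a z = A + ∑ a ∈ S, coef S a * blaschke a z := by
  intro N
  induction N using Nat.strong_induction_on with
  | _ N ih =>
    intro S hcard hne hdisc
    rcases Nat.lt_or_ge N 2 with hN | hN
    · -- card 1 case
      have hpos := Finset.card_pos.mpr hne
      have h1 : S.card = 1 := by omega
      obtain ⟨a, rfl⟩ := Finset.card_eq_one.mp h1
      refine ⟨0, fun z hz => ?_⟩
      simp [coef]
    · -- card ≥ 2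
      have h2 : 1 < S.card := by omega
      obtain ⟨x, hx, y, hy, hxy⟩ := Finset.one_lt_card.mp h2
      obtain ⟨c, hcS, hc0⟩ : ∃ c ∈ S, c ≠ 0 := by
        by_cases hx0 : x = 0
        · exact ⟨y, hy, fun h => hxy (by rw [hx0, h])⟩
        · exact ⟨x, hx, hx0⟩
      set T := S.erase c with hT
      have hcT : c ∉ T := Finset.notMem_erase c S
      have hTcard : T.card = N - 1 := by rw [hT, Finset.card_erase_of_mem hcS, hcard]
      have hTne : T.Nonempty := by
        rw [← Finset.card_pos, hTcard]; omega
      have hTdisc : ∀ a ∈ T, ‖a‖ < 1 := fun a ha =>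
        hdisc a (Finset.mem_of_mem_erase ha)
      obtain ⟨At, hAt⟩ := ih (N - 1) (by omega) T hTcard hTne hTdisc
      have hcb : (starRingEnd ℂ) c ≠ 0 := by
        simpa using hc0
      have hc1 : ‖c‖ < 1 := hdisc c hcS
      -- evaluate IH at z₀ = (conj c)⁻¹ to identify the coefficient at c
      have hC : ((starRingEnd ℂ) (∏ b ∈ T, blaschke b c))⁻¹
          = At + ∑ a ∈ T, coef T a * ((starRingEnd ℂ) (blaschke a c))⁻¹ := by
        have hz0 : ∀ a ∈ T, (starRingEnd ℂ) a * ((starRingEnd ℂ) c)⁻¹ ≠ 1 := by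
          intro a ha h
          rw [mul_inv_eq_one₀ hcb] at h
          exact (Finset.ne_of_mem_erase ha) ((starRingEnd ℂ).injective h)
        rw [map_prod, ← Finset.prod_inv_distrib]
        calc ∏ b ∈ T, ((starRingEnd ℂ) (blaschke b c))⁻¹
            = ∏ b ∈ T, blaschke b ((starRingEnd ℂ) c)⁻¹ := by
              refine Finset.prod_congr rfl fun a ha => ?_
              exact (blaschke_inv_conj a c hcb (Finset.ne_of_mem_erase ha)
                (hTdisc a ha) hc1).symm
          _ = At + ∑ a ∈ T, coef T a * blaschke a ((starRingEnd ℂ) c)⁻¹ :=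
              hAt ((starRingEnd ℂ) c)⁻¹ hz0
          _ = At + ∑ a ∈ T, coef T a * ((starRingEnd ℂ) (blaschke a c))⁻¹ := by
              congr 1
              refine Finset.sum_congr rfl fun a ha => ?_
              rw [blaschke_inv_conj a c hcb (Finset.ne_of_mem_erase ha)
                (hTdisc a ha) hc1]
      refine ⟨∑ a ∈ T, coef T a *
        (a * c + ((starRingEnd ℂ) (blaschke c a))⁻¹ * a
          + ((starRingEnd ℂ) (blaschke a c))⁻¹ * c), fun z hz => ?_⟩
      have hzT : ∀ a ∈ T, (starRingEnd ℂ) a * z ≠ 1 := fun a ha =>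
        hz a (Finset.mem_of_mem_erase ha)
      have hzc : (starRingEnd ℂ) c * z ≠ 1 := hz c hcS
      have claim1 : ∀ a ∈ T, coef T a * ((starRingEnd ℂ) (blaschke c a))⁻¹ = coef S a := by
        intro a ha
        have hac : a ≠ c := Finset.ne_of_mem_erase ha
        have hcSa : c ∈ S.erase a := Finset.mem_erase.mpr ⟨fun h => hac h.symm, hcS⟩
        unfold coef
        rw [← Finset.mul_prod_erase (S.erase a) (fun b => blaschke b a) hcSa,
          Finset.erase_right_comm, map_mul, mul_inv]
        ring
      have claim2 : At + ∑ a ∈ T, coef T a * ((starRingEnd ℂ) (blaschke a c))⁻¹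
          = coef S c := by rw [← hC]; rfl
      calc ∏ a ∈ S, blaschke a z
          = blaschke c z * ∏ a ∈ T, blaschke a z :=
            (Finset.mul_prod_erase S (fun a => blaschke a z) hcS).symm
        _ = blaschke c z * (At + ∑ a ∈ T, coef T a * blaschke a z) := by
            rw [hAt z hzT]
        _ = At * blaschke c z
            + ∑ a ∈ T, coef T a * (blaschke a z * blaschke c z) := by
            rw [mul_add, Finset.mul_sum]
            congr 1
            · ring
            · exact Finset.sum_congr rfl fun a ha => by ring
        _ = At * blaschke c z + ∑ a ∈ T,
              (coef T a * (a * c + ((starRingEnd ℂ) (blaschke c a))⁻¹ * a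
                  + ((starRingEnd ℂ) (blaschke a c))⁻¹ * c)
                + (coef T a * ((starRingEnd ℂ) (blaschke c a))⁻¹) * blaschke a z
                + (coef T a * ((starRingEnd ℂ) (blaschke a c))⁻¹) * blaschke c z) := by
            congr 1
            refine Finset.sum_congr rfl fun a ha => ?_
            rw [blaschke_two a c z (hTdisc a ha) hc1 (Finset.ne_of_mem_erase ha)
              (hzT a ha) hzc]
            ring
        _ = (∑ a ∈ T, coef T a *
              (a * c + ((starRingEnd ℂ) (blaschke c a))⁻¹ * a
                + ((starRingEnd ℂ) (blaschke a c))⁻¹ * c))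
            + ∑ a ∈ T, (coef T a * ((starRingEnd ℂ) (blaschke c a))⁻¹) * blaschke a z
            + (At + ∑ a ∈ T, coef T a * ((starRingEnd ℂ) (blaschke a c))⁻¹)
                * blaschke c z := by
            rw [Finset.sum_add_distrib, Finset.sum_add_distrib, ← Finset.sum_mul]
            ring
        _ = (∑ a ∈ T, coef T a *
              (a * c + ((starRingEnd ℂ) (blaschke c a))⁻¹ * a
                + ((starRingEnd ℂ) (blaschke a c))⁻¹ * c))
            + ∑ a ∈ T, coef S a * blaschke a z + coef S c * blaschke c z := by
            rw [claim2]
            congr 2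
            exact Finset.sum_congr rfl fun a ha => by rw [claim1 a ha]
        _ = _ := by
            rw [add_assoc]
            congr 1
            rw [add_comm (∑ a ∈ T, coef S a * blaschke a z)]
            exact Finset.add_sum_erase S (fun a => coef S a * blaschke a z) hcS

theorem stmt3 (n : ℕ) (hn : 1 ≤ n) (α : Fin n → ℂ)
    (hα : ∀ j, ‖α j‖ < 1) (hdist : Function.Injective α) :
    ∃ A : ℂ, ∀ z : ℂ, (∀ j, (starRingEnd ℂ) (α j) * z ≠ 1) →
      ∏ j, blaschke (α j) z
        = A + ∑ j, ((starRingEnd ℂ) (∏ s ∈ Finset.univ.erase j, blaschke (α s) (α j)))⁻¹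
            * blaschke (α j) z := by
  have hnn : (Finset.univ : Finset (Fin n)).Nonempty := ⟨⟨0, hn⟩, Finset.mem_univ _⟩
  set S : Finset ℂ := Finset.univ.image α with hS
  have hSne : S.Nonempty := hnn.image α
  have hSdisc : ∀ a ∈ S, ‖a‖ < 1 := by
    intro a ha
    obtain ⟨j, _, rfl⟩ := Finset.mem_image.mp ha
    exact hα j
  obtain ⟨A, hA⟩ := key S.card S rfl hSne hSdisc
  refine ⟨A, fun z hz => ?_⟩
  have hzS : ∀ a ∈ S, (starRingEnd ℂ) a * z ≠ 1 := by
    intro a ha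
    obtain ⟨j, _, rfl⟩ := Finset.mem_image.mp ha
    exact hz j
  have hco : ∀ j : Fin n, coef S (α j)
      = ((starRingEnd ℂ) (∏ s ∈ Finset.univ.erase j, blaschke (α s) (α j)))⁻¹ := by
    intro j
    unfold coef
    rw [hS, ← Finset.image_erase hdist, Finset.prod_image
      (fun x _ y _ h => hdist h)]
  calc ∏ j, blaschke (α j) z
      = ∏ a ∈ S, blaschke a z := by
        rw [hS]
        exact (Finset.prod_image (f := fun a => blaschke a z)
          fun x _ y _ h => hdist h).symm
    _ = A + ∑ a ∈ S, coef S a * blaschke a z := hA z hzS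
    _ = _ := by
        congr 1
        rw [hS, Finset.sum_image (fun x _ y _ h => hdist h)]
        exact Finset.sum_congr rfl fun j _ => by rw [hco j]

end
end

section
/- Let α_1, …, α_n ∈ 𝔻 be pairwise distinct and let B_0 = 1, B_k = ζ_1⋯ζ_k for 1 ≤ k ≤ n. If a_0, …, a_n ∈ ℂ are such that Σ_{k=0}^{n} (a_k B_k(t) + conj(a_k B_k(t))) ≥ 0 for all t ∈ 𝕋, then there exist b_0, …, b_n ∈ ℂ such that Σ_{k=0}^{n} (a_k B_k(t) + conj(a_k B_k(t))) = |Σ_{k=0}^{n} b_k B_k(t)|² for all t ∈ 𝕋. -/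
open Complex
open scoped ComplexOrder

noncomputable section

/-- The unit circle `{z : ℂ | |z| = 1}`. -/
abbrev UnitCircle : Type := Metric.sphere (0 : ℂ) 1

/-- The finite Blaschke product `B_k = ζ_1 ⋯ ζ_k` (with `B_0 = 1`), restricted to the
unit circle. -/
def BP (α : ℕ → ℂ) (k : ℕ) : UnitCircle → ℂ :=
  fun t => ∏ j ∈ Finset.Icc 1 k, blaschke (α j) (t : ℂ)

namespace FRaux

open Polynomial

lemma circ_mul_conj {t : ℂ} (h : ‖t‖ = 1) : t * (starRingEnd ℂ) t = 1 := by
  rw [Complex.mul_conj]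
  norm_cast
  rw [← Complex.sq_norm, h]; norm_num

lemma circ_ne_zero {t : ℂ} (h : ‖t‖ = 1) : t ≠ 0 := by
  intro h0; rw [h0] at h; simp at h

lemma circ_conj_ne_zero {t : ℂ} (h : ‖t‖ = 1) : (starRingEnd ℂ) t ≠ 0 := by
  simpa using circ_ne_zero h

lemma circle_infinite : {t : ℂ | ‖t‖ = 1}.Infinite := by
  have hinj : Set.InjOn (fun θ : ℝ => Complex.exp (θ * I)) (Set.Icc 0 Real.pi) := by
    intro x hx y hy hxy
    have hre : Real.cos x = Real.cos y := by
      have := congrArg Complex.re hxy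
      simpa [Complex.exp_ofReal_mul_I_re] using this
    exact Real.injOn_cos hx hy hre
  have hIcc : (Set.Icc (0:ℝ) Real.pi).Infinite := by
    exact Set.Icc_infinite Real.pi_pos
  have := (hIcc.image hinj)
  apply this.mono
  rintro z ⟨θ, _, rfl⟩
  simp [Complex.norm_exp_ofReal_mul_I]

/-- The "reflected" polynomial equals `G` when `G·conj(t)^N` is conjugation-invariant
on the circle. -/
lemma self_inversive (N : ℕ) (G : ℂ[X]) (hdeg : G.natDegree ≤ 2*N)
    (hreal : ∀ t : ℂ, ‖t‖ = 1 →
      (starRingEnd ℂ) (G.eval t) * t ^ (2*N) = G.eval t) :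
    (∑ k ∈ Finset.range (2*N+1), C ((starRingEnd ℂ) (G.coeff (2*N - k))) * X ^ k) = G := by
  set K : ℂ[X] := ∑ k ∈ Finset.range (2*N+1), C ((starRingEnd ℂ) (G.coeff (2*N - k))) * X ^ k
    with hK
  have key : ∀ t : ℂ, ‖t‖ = 1 → K.eval t = G.eval t := by
    intro t ht
    have htc := circ_mul_conj ht
    have hKe : K.eval t = ∑ k ∈ Finset.range (2*N+1),
        (starRingEnd ℂ) (G.coeff (2*N - k)) * t ^ k := by
      simp [hK, Polynomial.eval_finset_sum]
    have hre : ∑ k ∈ Finset.range (2*N+1), (starRingEnd ℂ) (G.coeff (2*N - k)) * t ^ k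
        = ∑ k ∈ Finset.range (2*N+1), (starRingEnd ℂ) (G.coeff k) * t ^ (2*N - k) := by
      have := Finset.sum_range_reflect
        (fun j => (starRingEnd ℂ) (G.coeff j) * t ^ (2*N - j)) (2*N+1)
      rw [← this]
      apply Finset.sum_congr rfl
      intro k hk
      rw [Finset.mem_range] at hk
      have hk' : k ≤ 2*N := by omega
      congr 2
      omega
    have hGe : G.eval t = ∑ k ∈ Finset.range (2*N+1), G.coeff k * t ^ k :=
      Polynomial.eval_eq_sum_range' (by omega) t
    have hconj : (starRingEnd ℂ) (G.eval t) * t ^ (2*N)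
        = ∑ k ∈ Finset.range (2*N+1), (starRingEnd ℂ) (G.coeff k) * t ^ (2*N - k) := by
      rw [hGe, map_sum, Finset.sum_mul]
      apply Finset.sum_congr rfl
      intro k hk
      rw [Finset.mem_range] at hk
      have hk' : k ≤ 2*N := by omega
      rw [map_mul, map_pow, mul_assoc]
      congr 1
      have : t ^ (2*N) = t ^ (2*N - k) * t ^ k := by
        rw [← pow_add]; congr 1; omega
      rw [this, ← mul_assoc]
      have : ((starRingEnd ℂ) t) ^ k * t ^ k = 1 := by
        rw [← mul_pow, mul_comm, htc, one_pow]
      rw [mul_right_comm, this, one_mul]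
    rw [hKe, hre, ← hconj, hreal t ht]
  have : K - G = 0 := by
    apply Polynomial.eq_zero_of_infinite_isRoot
    apply circle_infinite.mono
    intro t ht
    simp only [Set.mem_setOf_eq] at ht ⊢
    simp [Polynomial.IsRoot, key t ht]
  exact sub_eq_zero.mp this

lemma circ_conj_eq_inv {t : ℂ} (h : ‖t‖ = 1) : (starRingEnd ℂ) t = t⁻¹ :=
  eq_inv_of_mul_eq_one_right (circ_mul_conj h)

lemma real_of_nonneg {z : ℂ} (h : 0 ≤ z) : (starRingEnd ℂ) z = z := by
  rw [Complex.le_def] at h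
  rw [Complex.conj_eq_iff_im]
  exact h.2.symm

/-- From pointwise nonnegativity on the circle we get the conjugation relation. -/
lemma hreal_of_pos (N : ℕ) (G : ℂ[X])
    (hpos : ∀ t : ℂ, ‖t‖ = 1 → 0 ≤ G.eval t * ((starRingEnd ℂ) t)^N) :
    ∀ t : ℂ, ‖t‖ = 1 → (starRingEnd ℂ) (G.eval t) * t ^ (2*N) = G.eval t := by
  intro t ht
  have h := real_of_nonneg (hpos t ht)
  rw [map_mul, map_pow, Complex.conj_conj] at h
  have htc := circ_mul_conj ht
  calc (starRingEnd ℂ) (G.eval t) * t ^ (2*N)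
      = ((starRingEnd ℂ) (G.eval t) * t ^ N) * t ^ N := by rw [mul_assoc, ← pow_add]; ring_nf
    _ = (G.eval t * ((starRingEnd ℂ) t)^N) * t ^ N := by rw [h]
    _ = G.eval t * (((starRingEnd ℂ) t) * t) ^ N := by rw [mul_pow]; ring
    _ = G.eval t := by rw [mul_comm ((starRingEnd ℂ) t) t, htc, one_pow, mul_one]

lemma coeff_zero_conj (N : ℕ) (G : ℂ[X]) (hdeg : G.natDegree ≤ 2*N)
    (hreal : ∀ t : ℂ, ‖t‖ = 1 →
      (starRingEnd ℂ) (G.eval t) * t ^ (2*N) = G.eval t) :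
    G.coeff 0 = (starRingEnd ℂ) (G.coeff (2*N)) := by
  have h := self_inversive N G hdeg hreal
  have := congrArg (fun p : ℂ[X] => p.coeff 0) h
  simp only [Polynomial.finset_sum_coeff, Polynomial.coeff_C_mul, Polynomial.coeff_X_pow,
    mul_ite, mul_one, mul_zero] at this
  rw [Finset.sum_ite_eq] at this
  simp at this
  rw [← this]

lemma root_reflect (N : ℕ) (G : ℂ[X]) (hdeg : G.natDegree ≤ 2*N)
    (hreal : ∀ t : ℂ, ‖t‖ = 1 →
      (starRingEnd ℂ) (G.eval t) * t ^ (2*N) = G.eval t)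
    {β : ℂ} (hβ0 : β ≠ 0) (hroot : G.eval β = 0) :
    G.eval (((starRingEnd ℂ) β)⁻¹) = 0 := by
  have hK := self_inversive N G hdeg hreal
  set γ := ((starRingEnd ℂ) β)⁻¹ with hγ
  have hcβ : (starRingEnd ℂ) β ≠ 0 := by simpa using hβ0
  have hev : G.eval γ = ∑ k ∈ Finset.range (2*N+1),
      (starRingEnd ℂ) (G.coeff (2*N - k)) * γ ^ k := by
    conv_lhs => rw [← hK]
    simp [Polynomial.eval_finset_sum]
  have key : ((starRingEnd ℂ) β) ^ (2*N) * G.eval γ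
      = (starRingEnd ℂ) (∑ k ∈ Finset.range (2*N+1), G.coeff (2*N - k) * β ^ (2*N - k)) := by
    rw [hev, Finset.mul_sum, map_sum]
    apply Finset.sum_congr rfl
    intro k hk
    rw [Finset.mem_range] at hk
    have hk' : k ≤ 2*N := by omega
    rw [map_mul, map_pow]
    have : ((starRingEnd ℂ) β) ^ (2*N) * γ ^ k = ((starRingEnd ℂ) β) ^ (2*N - k) := by
      rw [hγ, inv_pow, ← div_eq_mul_inv, div_eq_iff (pow_ne_zero _ hcβ), ← pow_add]
      congr 1; omega
    rw [← mul_assoc, mul_comm (((starRingEnd ℂ) β) ^ (2*N)) _, mul_assoc, this]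
  have hsum : (∑ k ∈ Finset.range (2*N+1), G.coeff (2*N - k) * β ^ (2*N - k)) = G.eval β := by
    have := Finset.sum_range_reflect (fun j => G.coeff j * β ^ j) (2*N+1)
    have h2 : ∀ k ∈ Finset.range (2*N+1),
        G.coeff (2*N - k) * β ^ (2*N - k) = (fun j => G.coeff j * β ^ j) (2*N+1-1-k) := by
      intro k hk; rw [Finset.mem_range] at hk
      simp only []
      congr 2 <;> omega
    rw [Finset.sum_congr rfl h2, this, ← Polynomial.eval_eq_sum_range' (by omega : G.natDegree < 2*N+1)]
  rw [hsum, hroot, map_zero] at key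
  exact (mul_eq_zero.mp key).resolve_left (pow_ne_zero _ hcβ)


lemma isClosed_nonneg : IsClosed {z : ℂ | 0 ≤ z} := by
  have : {z : ℂ | 0 ≤ z} = Complex.re ⁻¹' (Set.Ici 0) ∩ Complex.im ⁻¹' {0} := by
    ext z
    simp [Complex.le_def, eq_comm]
  rw [this]
  exact (isClosed_Ici.preimage Complex.continuous_re).inter
    (isClosed_singleton.preimage Complex.continuous_im)

/-- If a continuous function is nonneg on the circle minus one point, it is nonneg there too. -/
lemma nonneg_at_of_off {f : ℂ → ℂ} (hf : Continuous f) {β : ℂ} (hβ : ‖β‖ = 1)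
    (h : ∀ t : ℂ, ‖t‖ = 1 → t ≠ β → 0 ≤ f t) : 0 ≤ f β := by
  set u : ℕ → ℂ := fun j => β * Complex.exp (((1/(j+1) : ℝ) : ℂ) * I) with hu
  have habs : ∀ j, ‖u j‖ = 1 := by
    intro j
    rw [hu]
    simp only []
    rw [norm_mul, hβ, one_mul, Complex.norm_exp_ofReal_mul_I]
  have hne : ∀ j, u j ≠ β := by
    intro j heq
    have hβ0 : β ≠ 0 := circ_ne_zero hβ
    have he : Complex.exp (((1/(j+1) : ℝ) : ℂ) * I) = 1 :=
      mul_left_cancel₀ hβ0 (by rw [mul_one]; exact heq)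
    rw [Complex.exp_eq_one_iff] at he
    obtain ⟨m, hm⟩ := he
    have hm' : ((1/(j+1):ℝ) : ℂ) = (m:ℂ) * (2*(Real.pi:ℂ)) := by
      have h2 : ((1/(j+1):ℝ):ℂ) * I = ((m:ℂ) * (2*(Real.pi:ℂ))) * I := by rw [hm]; ring
      exact mul_right_cancel₀ Complex.I_ne_zero h2
    have hr : (1/(j+1):ℝ) = m * (2*Real.pi) := by exact_mod_cast hm'
    have hj : (0:ℝ) < 1/(j+1) := by positivity
    have hj2 : (1:ℝ)/(j+1) ≤ 1 := by
      rw [div_le_one (by positivity)]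
      have : (0:ℝ) ≤ j := Nat.cast_nonneg j
      linarith
    have hpi := Real.pi_gt_three
    rcases le_or_gt m 0 with hm0 | hm0
    · have : (m:ℝ) ≤ 0 := by exact_mod_cast hm0
      nlinarith
    · have : (1:ℝ) ≤ m := by exact_mod_cast hm0
      nlinarith
  have htend : Filter.Tendsto u Filter.atTop (nhds β) := by
    have h1 : Filter.Tendsto (fun j : ℕ => (1/(j+1) : ℝ)) Filter.atTop (nhds 0) :=
      tendsto_one_div_add_atTop_nhds_zero_nat
    have h2 : Continuous fun x : ℝ => β * Complex.exp ((x:ℂ) * I) := by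
      continuity
    have h3 := (h2.tendsto 0).comp h1
    have h4 : (fun x : ℝ => β * Complex.exp ((x:ℂ) * I)) ∘ (fun j : ℕ => (1/(j+1):ℝ)) = u := by
      funext j; rfl
    rw [h4] at h3
    simpa using h3
  have : Filter.Tendsto (fun j => f (u j)) Filter.atTop (nhds (f β)) :=
    (hf.tendsto β).comp htend
  exact isClosed_nonneg.mem_of_tendsto this
    (Filter.Eventually.of_forall fun j => h (u j) (habs j) (hne j))

/-- At a circle root of `G`, the derivative also vanishes (from nonnegativity). -/
lemma deriv_zero_of_circle_root (N : ℕ) (G : ℂ[X])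
    (hpos : ∀ t : ℂ, ‖t‖ = 1 → 0 ≤ G.eval t * ((starRingEnd ℂ) t)^N)
    {β : ℂ} (hβ : ‖β‖ = 1) (hroot : G.eval β = 0) :
    G.derivative.eval β = 0 := by
  have hβ0 : β ≠ 0 := circ_ne_zero hβ
  set u : ℝ → ℂ := fun θ => β * Complex.exp ((θ:ℂ) * I) with hu
  set H : ℝ → ℂ := fun θ =>
    G.eval (u θ) * ((β⁻¹)^N * Complex.exp (-((N:ℂ) * ((θ:ℂ) * I)))) with hH
  have habs : ∀ θ, ‖u θ‖ = 1 := by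
    intro θ
    rw [hu]
    simp only []
    rw [norm_mul, hβ, one_mul, Complex.norm_exp_ofReal_mul_I]
  have hHeq : ∀ θ, H θ = G.eval (u θ) * ((starRingEnd ℂ) (u θ))^N := by
    intro θ
    rw [hH]
    simp only []
    congr 1
    rw [circ_conj_eq_inv (habs θ), hu]
    simp only []
    rw [mul_inv, ← Complex.exp_neg, mul_pow, ← Complex.exp_nat_mul]
    congr 2
    ring
  have hHpos : ∀ θ, 0 ≤ H θ := fun θ => (hHeq θ) ▸ hpos (u θ) (habs θ)
  have hu0 : u 0 = β := by rw [hu]; simp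
  have hH0 : H 0 = 0 := by
    rw [hH]; simp only []
    rw [hu0, hroot, zero_mul]
  -- derivative computations at 0
  have hmulI : HasDerivAt (fun θ : ℝ => (θ:ℂ) * I) I 0 := by
    have h0 : HasDerivAt (fun θ : ℝ => (θ:ℂ)) 1 0 := by
      exact (Complex.ofRealCLM.hasDerivAt (x := (0:ℝ))).congr_deriv (by simp)
    simpa using h0.mul_const I
  have hexp : HasDerivAt (fun θ : ℝ => Complex.exp ((θ:ℂ) * I)) I 0 := by
    have := hmulI.cexp
    simpa using this
  have hderivu : HasDerivAt u (β * I) 0 := by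
    rw [hu]
    simpa using hexp.const_mul β
  have hGu : HasDerivAt (fun θ => G.eval (u θ)) (G.derivative.eval β * (β * I)) 0 := by
    have hp : HasDerivAt (fun x => Polynomial.eval x G) (G.derivative.eval β) (u 0) := by
      rw [hu0]; exact Polynomial.hasDerivAt G β
    have := HasDerivAt.comp (0:ℝ) hp hderivu
    exact this
  have harg : HasDerivAt (fun θ : ℝ => -((N:ℂ) * ((θ:ℂ) * I))) (-((N:ℂ) * I)) 0 := by
    exact (hmulI.const_mul (N:ℂ)).neg
  have hexpneg : HasDerivAt (fun θ : ℝ => Complex.exp (-((N:ℂ) * ((θ:ℂ) * I))))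
      (-((N:ℂ) * I)) 0 := by
    have := harg.cexp
    simpa using this
  have hg : HasDerivAt (fun θ : ℝ => (β⁻¹)^N * Complex.exp (-((N:ℂ) * ((θ:ℂ) * I))))
      ((β⁻¹)^N * -((N:ℂ) * I)) 0 := hexpneg.const_mul _
  have hHd : HasDerivAt H (G.derivative.eval β * (β * I) * (β⁻¹)^N) 0 := by
    have hmul := hGu.mul hg
    rw [hH]
    refine hmul.congr_deriv ?_
    rw [hu0, hroot]
    simp
  set d : ℂ := G.derivative.eval β * (β * I) * (β⁻¹)^N with hd
  have hre : HasDerivAt (fun θ => (H θ).re) d.re 0 :=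
    (Complex.reCLM.hasFDerivAt.comp_hasDerivAt 0 hHd)
  have hmin : IsLocalMin (fun θ => (H θ).re) 0 := by
    apply Filter.Eventually.of_forall
    intro θ
    have h1 := hHpos θ
    rw [Complex.le_def] at h1
    simpa [hH0] using h1.1
  have hdre : d.re = 0 := by
    have := hmin.deriv_eq_zero
    rwa [hre.deriv] at this
  have him : HasDerivAt (fun θ => (H θ).im) d.im 0 :=
    (Complex.imCLM.hasFDerivAt.comp_hasDerivAt 0 hHd)
  have himfun : (fun θ => (H θ).im) = fun _ => (0:ℝ) := by
    funext θ
    have h1 := hHpos θ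
    rw [Complex.le_def] at h1
    simpa using h1.2.symm
  have hdim : d.im = 0 := by
    have h0 : HasDerivAt (fun _ : ℝ => (0:ℝ)) 0 0 := hasDerivAt_const _ _
    rw [himfun] at him
    exact him.unique h0
  have hd0 : d = 0 := Complex.ext hdre hdim
  rw [hd, mul_assoc] at hd0
  have h1 : β * I * (β⁻¹)^N ≠ 0 :=
    mul_ne_zero (mul_ne_zero hβ0 Complex.I_ne_zero) (pow_ne_zero _ (inv_ne_zero hβ0))
  exact (mul_eq_zero.mp hd0).resolve_right h1


lemma nonneg_scale {r : ℝ} (hr : 0 < r) {w v : ℂ} (h : v = (r:ℂ) * w) (hv : 0 ≤ v) :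
    0 ≤ w := by
  have hw : w = ((r⁻¹ : ℝ) : ℂ) * v := by
    rw [h, ← mul_assoc]
    norm_cast
    rw [inv_mul_cancel₀ hr.ne', Complex.ofReal_one, one_mul]
  rw [hw]
  refine mul_nonneg ?_ hv
  exact_mod_cast le_of_lt (inv_pos.mpr hr)


/-- Common final step: absorb a factor `normSq (t - ρ)` into the square. -/
lemma step_factor (N : ℕ) (G : ℂ[X]) (ρ : ℂ) (G₃ : ℂ[X])
    (hfull : ∀ t : ℂ, ‖t‖ = 1 →
      G.eval t * ((starRingEnd ℂ) t)^(N+1)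
        = ((Complex.normSq (t - ρ) : ℝ) : ℂ) * (G₃.eval t * ((starRingEnd ℂ) t)^N))
    (hex : ∃ p : ℂ[X], p.natDegree ≤ N ∧ ∀ t : ℂ, ‖t‖ = 1 →
      G₃.eval t * ((starRingEnd ℂ) t)^N = p.eval t * (starRingEnd ℂ) (p.eval t)) :
    ∃ p : ℂ[X], p.natDegree ≤ N+1 ∧ ∀ t : ℂ, ‖t‖ = 1 →
      G.eval t * ((starRingEnd ℂ) t)^(N+1) = p.eval t * (starRingEnd ℂ) (p.eval t) := by
  obtain ⟨p₁, hp₁d, hp₁e⟩ := hex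
  refine ⟨(X - C ρ) * p₁, ?_, ?_⟩
  · calc ((X - C ρ) * p₁).natDegree ≤ (X - C ρ).natDegree + p₁.natDegree :=
        Polynomial.natDegree_mul_le
      _ ≤ N + 1 := by rw [natDegree_X_sub_C]; omega
  · intro t ht
    rw [hfull t ht, hp₁e t ht]
    simp only [Polynomial.eval_mul, Polynomial.eval_sub, Polynomial.eval_X, Polynomial.eval_C,
      map_mul, map_sub]
    have hns : ((Complex.normSq (t - ρ) : ℝ) : ℂ)
        = (t - ρ) * ((starRingEnd ℂ) t - (starRingEnd ℂ) ρ) := by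
      rw [← Complex.mul_conj, map_sub]
    rw [hns]
    ring

/-- Fejér–Riesz on the circle: a polynomial `G` of degree at most `2N` with
`G(t)·conj(t)^N ≥ 0` on the unit circle factors as `|p(t)|²` there. -/
lemma fejer_riesz (N : ℕ) : ∀ (G : ℂ[X]), G.natDegree ≤ 2*N →
    (∀ t : ℂ, ‖t‖ = 1 → 0 ≤ G.eval t * ((starRingEnd ℂ) t)^N) →
    ∃ p : ℂ[X], p.natDegree ≤ N ∧ ∀ t : ℂ, ‖t‖ = 1 →
      G.eval t * ((starRingEnd ℂ) t)^N = p.eval t * (starRingEnd ℂ) (p.eval t) := by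
  induction N with
  | zero =>
    intro G hdeg hpos
    have hG : G = C (G.coeff 0) := Polynomial.eq_C_of_natDegree_le_zero (by omega)
    have h1 := hpos 1 (by simp)
    rw [hG] at h1
    simp at h1
    set c := G.coeff 0 with hc
    have hre : 0 ≤ c.re ∧ 0 = c.im := by rwa [Complex.le_def] at h1
    refine ⟨C ((Real.sqrt c.re : ℝ) : ℂ), by simp, ?_⟩
    intro t ht
    rw [hG]
    simp only [Polynomial.eval_C, pow_zero, mul_one]
    rw [Complex.conj_ofReal]
    norm_cast
    rw [Real.mul_self_sqrt hre.1]
    apply Complex.ext <;> simp [← hre.2]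
  | succ N IH =>
    intro G hdeg hpos
    by_cases hG0 : G = 0
    · exact ⟨0, by simp, fun t ht => by simp [hG0]⟩
    have hreal := hreal_of_pos (N+1) G hpos
    have hc := coeff_zero_conj (N+1) G hdeg hreal
    by_cases hc0 : G.coeff 0 = 0
    · -- root at zero: divide by X
      obtain ⟨G₁, hG₁⟩ := Polynomial.X_dvd_iff.mpr hc0
      have hG₁0 : G₁ ≠ 0 := fun h => hG0 (by rw [hG₁, h, mul_zero])
      have htop : G.coeff (2*(N+1)) = 0 := by
        rw [hc0] at hc
        have := hc.symm
        simpa using this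
      have hnd : G.natDegree ≤ 2*N+1 := by
        rcases lt_or_eq_of_le hdeg with h | h
        · omega
        · exfalso
          apply Polynomial.leadingCoeff_ne_zero.mpr hG0
          rw [Polynomial.leadingCoeff, h, htop]
      have hndG₁ : G₁.natDegree ≤ 2*N := by
        have := Polynomial.natDegree_mul (Polynomial.X_ne_zero (R := ℂ)) hG₁0
        rw [← hG₁, Polynomial.natDegree_X] at this
        omega
      have hpos₁ : ∀ t : ℂ, ‖t‖ = 1 → 0 ≤ G₁.eval t * ((starRingEnd ℂ) t)^N := by
        intro t ht
        have hid : G₁.eval t * ((starRingEnd ℂ) t)^N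
            = G.eval t * ((starRingEnd ℂ) t)^(N+1) := by
          rw [hG₁, Polynomial.eval_mul, Polynomial.eval_X, pow_succ]
          have := circ_mul_conj ht
          calc G₁.eval t * ((starRingEnd ℂ) t)^N
              = (t * (starRingEnd ℂ) t) * (G₁.eval t * ((starRingEnd ℂ) t)^N) := by
                rw [this, one_mul]
            _ = t * G₁.eval t * (((starRingEnd ℂ) t)^N * (starRingEnd ℂ) t) := by ring
        rw [hid]
        exact hpos t ht
      obtain ⟨p, hpd, hpe⟩ := IH G₁ hndG₁ hpos₁
      refine ⟨p, by omega, ?_⟩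
      intro t ht
      rw [← hpe t ht]
      rw [hG₁, Polynomial.eval_mul, Polynomial.eval_X, pow_succ]
      have := circ_mul_conj ht
      calc t * G₁.eval t * (((starRingEnd ℂ) t)^N * (starRingEnd ℂ) t)
          = (t * (starRingEnd ℂ) t) * (G₁.eval t * ((starRingEnd ℂ) t)^N) := by ring
        _ = G₁.eval t * ((starRingEnd ℂ) t)^N := by rw [this, one_mul]
    · -- coeff 0 ≠ 0 : G has exact degree 2N+2 and a nonzero root
      have hctop : G.coeff (2*(N+1)) ≠ 0 := by
        intro h
        rw [h, map_zero] at hc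
        exact hc0 hc
      have hnd : G.natDegree = 2*(N+1) :=
        le_antisymm hdeg (Polynomial.le_natDegree_of_ne_zero hctop)
      have hdegpos : 0 < G.degree := by
        rw [← Polynomial.natDegree_pos_iff_degree_pos]
        omega
      obtain ⟨β, hβroot⟩ := Complex.exists_root hdegpos
      have hβ0 : β ≠ 0 := by
        intro h
        rw [h] at hβroot
        rw [Polynomial.IsRoot, ← Polynomial.coeff_zero_eq_eval_zero] at hβroot
        exact hc0 hβroot
      -- get a root ρ of modulus ≤ 1
      have hroot2 : ∃ ρ : ℂ, ρ ≠ 0 ∧ G.eval ρ = 0 ∧ ‖ρ‖ ≤ 1 := by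
        rcases le_or_gt (‖β‖) 1 with hb | hb
        · exact ⟨β, hβ0, hβroot, hb⟩
        · refine ⟨((starRingEnd ℂ) β)⁻¹, ?_, root_reflect (N+1) G hdeg hreal hβ0 hβroot, ?_⟩
          · simp [hβ0]
          · rw [norm_inv, Complex.norm_conj]
            rw [inv_le_one_iff₀]
            right; linarith
      obtain ⟨ρ, hρ0, hρroot, hρle⟩ := hroot2
      rcases lt_or_eq_of_le hρle with hρlt | hρeq
      · -- |ρ| < 1 : pair ρ with γ = 1/conj ρ
        set γ := ((starRingEnd ℂ) ρ)⁻¹ with hγ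
        have hγroot : G.eval γ = 0 := root_reflect (N+1) G hdeg hreal hρ0 hρroot
        have hγabs : 1 < ‖γ‖ := by
          rw [hγ, norm_inv, Complex.norm_conj]
          rw [lt_inv_comm₀]
          · simpa using hρlt
          · norm_num
          · simpa [norm_pos_iff] using hρ0
        have hργ : ρ ≠ γ := fun h => by
          rw [← h] at hγabs; linarith
        have hcρ : (starRingEnd ℂ) ρ ≠ 0 := by simpa using hρ0
        have hcop : IsCoprime (X - C ρ) (X - C γ) := by
          refine ⟨C ((γ - ρ)⁻¹), -C ((γ - ρ)⁻¹), ?_⟩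
          have hne : γ - ρ ≠ 0 := sub_ne_zero.mpr (Ne.symm hργ)
          have h1 : C ((γ-ρ)⁻¹) * (C γ - C ρ) = (1 : ℂ[X]) := by
            rw [← C_sub, ← C_mul, inv_mul_cancel₀ hne, C_1]
          linear_combination h1
        have hdvd : (X - C ρ) * (X - C γ) ∣ G :=
          hcop.mul_dvd (dvd_iff_isRoot.mpr hρroot) (dvd_iff_isRoot.mpr hγroot)
        obtain ⟨G₁, hG₁⟩ := hdvd
        have hG₁0 : G₁ ≠ 0 := fun h => hG0 (by rw [hG₁, h, mul_zero])
        have hnd₁ : G₁.natDegree ≤ 2*N := by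
          have hm0 : (X - C ρ) * (X - C γ) ≠ 0 :=
            mul_ne_zero (X_sub_C_ne_zero ρ) (X_sub_C_ne_zero γ)
          have h3 := Polynomial.natDegree_mul hm0 hG₁0
          rw [← hG₁] at h3
          have h2 : ((X - C ρ) * (X - C γ)).natDegree = 2 := by
            rw [Polynomial.natDegree_mul (X_sub_C_ne_zero ρ) (X_sub_C_ne_zero γ),
              natDegree_X_sub_C, natDegree_X_sub_C]
          omega
        set G₃ : ℂ[X] := C (-((starRingEnd ℂ) ρ)⁻¹) * G₁ with hG₃def
        have hdeg₃ : G₃.natDegree ≤ 2*N := by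
          calc G₃.natDegree ≤ (C (-((starRingEnd ℂ) ρ)⁻¹)).natDegree + G₁.natDegree :=
                Polynomial.natDegree_mul_le
            _ ≤ 2*N := by rw [Polynomial.natDegree_C]; omega
        have hfull : ∀ t : ℂ, ‖t‖ = 1 →
            G.eval t * ((starRingEnd ℂ) t)^(N+1)
              = ((Complex.normSq (t - ρ) : ℝ) : ℂ) * (G₃.eval t * ((starRingEnd ℂ) t)^N) := by
          intro t ht
          have hct := circ_mul_conj ht
          have hns : ((Complex.normSq (t - ρ) : ℝ) : ℂ)
              = (t - ρ) * ((starRingEnd ℂ) t - (starRingEnd ℂ) ρ) := by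
            rw [← Complex.mul_conj, map_sub]
          have hkey : (t - γ) * (starRingEnd ℂ) t
              = -(((starRingEnd ℂ) t - (starRingEnd ℂ) ρ)) * ((starRingEnd ℂ) ρ)⁻¹ := by
            rw [hγ]
            have hinv : (starRingEnd ℂ) ρ * ((starRingEnd ℂ) ρ)⁻¹ = 1 := mul_inv_cancel₀ hcρ
            linear_combination hct - hinv
          rw [hG₁, hG₃def]
          simp only [Polynomial.eval_mul, Polynomial.eval_sub, Polynomial.eval_X,
            Polynomial.eval_C]
          rw [hns, pow_succ]
          calc (t - ρ) * (t - γ) * G₁.eval t * (((starRingEnd ℂ) t)^N * (starRingEnd ℂ) t)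
              = (t - ρ) * ((t - γ) * (starRingEnd ℂ) t) * (G₁.eval t * ((starRingEnd ℂ) t)^N) := by
                ring
            _ = (t - ρ) * (-(((starRingEnd ℂ) t - (starRingEnd ℂ) ρ)) * ((starRingEnd ℂ) ρ)⁻¹)
                  * (G₁.eval t * ((starRingEnd ℂ) t)^N) := by rw [hkey]
            _ = (t - ρ) * ((starRingEnd ℂ) t - (starRingEnd ℂ) ρ)
                  * (-((starRingEnd ℂ) ρ)⁻¹ * G₁.eval t * ((starRingEnd ℂ) t)^N) := by ring
        have hpos₃ : ∀ t : ℂ, ‖t‖ = 1 →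
            0 ≤ G₃.eval t * ((starRingEnd ℂ) t)^N := by
          intro t ht
          have htρ : t ≠ ρ := by
            intro h; rw [h] at ht; rw [ht] at hρlt; exact lt_irrefl _ hρlt
          have hpos' : 0 < Complex.normSq (t - ρ) :=
            Complex.normSq_pos.mpr (sub_ne_zero.mpr htρ)
          exact nonneg_scale hpos' (hfull t ht) (hpos t ht)
        obtain ⟨p₁, hp₁d, hp₁e⟩ := IH G₃ hdeg₃ hpos₃
        exact step_factor N G ρ G₃ hfull ⟨p₁, hp₁d, hp₁e⟩
      · -- |ρ| = 1 : double root
        have hρ1 : ‖ρ‖ = 1 := hρeq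
        have hder := deriv_zero_of_circle_root (N+1) G hpos hρ1 hρroot
        obtain ⟨G₂, hG₂⟩ := dvd_iff_isRoot.mpr hρroot
        have hG₂ρ : G₂.eval ρ = 0 := by
          have hd : G.derivative = G₂ + (X - C ρ) * G₂.derivative := by
            rw [hG₂, derivative_mul, derivative_X_sub_C]; ring
          have := hder
          rw [hd] at this
          simpa using this
        obtain ⟨G₁, hG₁⟩ := dvd_iff_isRoot.mpr hG₂ρ
        have hGsq : G = (X - C ρ)^2 * G₁ := by rw [hG₂, hG₁]; ring
        have hG₁0 : G₁ ≠ 0 := fun h => hG0 (by rw [hGsq, h, mul_zero])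
        have hnd₁ : G₁.natDegree ≤ 2*N := by
          have hm0 : (X - C ρ)^2 ≠ 0 := pow_ne_zero _ (X_sub_C_ne_zero ρ)
          have h3 := Polynomial.natDegree_mul hm0 hG₁0
          rw [← hGsq] at h3
          have h2 : ((X - C ρ)^2).natDegree = 2 := by
            rw [Polynomial.natDegree_pow, natDegree_X_sub_C]
          omega
        set G₃ : ℂ[X] := C (-ρ) * G₁ with hG₃def
        have hdeg₃ : G₃.natDegree ≤ 2*N := by
          calc G₃.natDegree ≤ (C (-ρ)).natDegree + G₁.natDegree := Polynomial.natDegree_mul_le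
            _ ≤ 2*N := by rw [Polynomial.natDegree_C]; omega
        have hfull : ∀ t : ℂ, ‖t‖ = 1 →
            G.eval t * ((starRingEnd ℂ) t)^(N+1)
              = ((Complex.normSq (t - ρ) : ℝ) : ℂ) * (G₃.eval t * ((starRingEnd ℂ) t)^N) := by
          intro t ht
          have hct := circ_mul_conj ht
          have hcρ2 := circ_mul_conj hρ1
          have hns : ((Complex.normSq (t - ρ) : ℝ) : ℂ)
              = (t - ρ) * ((starRingEnd ℂ) t - (starRingEnd ℂ) ρ) := by
            rw [← Complex.mul_conj, map_sub]
          have hkey : (t - ρ)^2 * (starRingEnd ℂ) t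
              = ((t - ρ) * ((starRingEnd ℂ) t - (starRingEnd ℂ) ρ)) * (-ρ) := by
            linear_combination ((t:ℂ) - ρ) * hct - (t - ρ) * hcρ2
          rw [hGsq, hG₃def]
          simp only [Polynomial.eval_mul, Polynomial.eval_sub, Polynomial.eval_X,
            Polynomial.eval_C, Polynomial.eval_pow]
          rw [hns, pow_succ]
          calc (t - ρ)^2 * G₁.eval t * (((starRingEnd ℂ) t)^N * (starRingEnd ℂ) t)
              = ((t - ρ)^2 * (starRingEnd ℂ) t) * (G₁.eval t * ((starRingEnd ℂ) t)^N) := by ring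
            _ = (((t - ρ) * ((starRingEnd ℂ) t - (starRingEnd ℂ) ρ)) * (-ρ))
                  * (G₁.eval t * ((starRingEnd ℂ) t)^N) := by rw [hkey]
            _ = (t - ρ) * ((starRingEnd ℂ) t - (starRingEnd ℂ) ρ)
                  * (-ρ * G₁.eval t * ((starRingEnd ℂ) t)^N) := by ring
        have hpos₃ : ∀ t : ℂ, ‖t‖ = 1 →
            0 ≤ G₃.eval t * ((starRingEnd ℂ) t)^N := by
          have hcont : Continuous fun z : ℂ => G₃.eval z * ((starRingEnd ℂ) z)^N :=
            (G₃.continuous).mul (Complex.continuous_conj.pow N)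
          have hoff : ∀ t : ℂ, ‖t‖ = 1 → t ≠ ρ →
              0 ≤ G₃.eval t * ((starRingEnd ℂ) t)^N := by
            intro t ht htρ
            have hpos' : 0 < Complex.normSq (t - ρ) :=
              Complex.normSq_pos.mpr (sub_ne_zero.mpr htρ)
            exact nonneg_scale hpos' (hfull t ht) (hpos t ht)
          intro t ht
          by_cases htρ : t = ρ
          · subst htρ
            exact nonneg_at_of_off hcont ht hoff
          · exact hoff t ht htρ
        obtain ⟨p₁, hp₁d, hp₁e⟩ := IH G₃ hdeg₃ hpos₃
        exact step_factor N G ρ G₃ hfull ⟨p₁, hp₁d, hp₁e⟩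


/-- Numerator-type products. -/
def Pm (α : ℕ → ℂ) (m k : ℕ) : ℂ[X] := ∏ j ∈ Finset.Ioc m k, (X - C (α j))
/-- Denominator-type products. -/
def Rm (α : ℕ → ℂ) (n k : ℕ) : ℂ[X] :=
  ∏ j ∈ Finset.Ioc k n, (1 - C ((starRingEnd ℂ) (α j)) * X)
def Ek (α : ℕ → ℂ) (n k : ℕ) : ℂ[X] := Pm α 0 k * Rm α n k
def Ekσ (α : ℕ → ℂ) (n k : ℕ) : ℂ[X] := Rm α k 0 * Pm α k n

lemma one_sub_ne {c t : ℂ} (hc : ‖c‖ < 1) (ht : ‖t‖ = 1) :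
    (1 : ℂ) - (starRingEnd ℂ) c * t ≠ 0 := by
  intro h
  have h1 : (starRingEnd ℂ) c * t = 1 := by
    have := sub_eq_zero.mp h; exact this.symm
  have h2 := congrArg (‖·‖) h1
  rw [norm_mul, Complex.norm_conj, ht, mul_one, norm_one] at h2
  linarith

lemma natDegree_Pm (α : ℕ → ℂ) (m k : ℕ) : (Pm α m k).natDegree ≤ k - m := by
  refine le_trans (Polynomial.natDegree_prod_le _ _) ?_
  have : ∀ j ∈ Finset.Ioc m k, (X - C (α j)).natDegree ≤ 1 := by
    intro j _; rw [natDegree_X_sub_C]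
  refine le_trans (Finset.sum_le_card_nsmul _ _ 1 this) ?_
  simp [Nat.card_Ioc]

lemma natDegree_Rm (α : ℕ → ℂ) (n k : ℕ) : (Rm α n k).natDegree ≤ n - k := by
  refine le_trans (Polynomial.natDegree_prod_le _ _) ?_
  have : ∀ j ∈ Finset.Ioc k n, ((1 : ℂ[X]) - C ((starRingEnd ℂ) (α j)) * X).natDegree ≤ 1 := by
    intro j _
    refine le_trans (Polynomial.natDegree_sub_le _ _) ?_
    simp only [Polynomial.natDegree_one]
    refine max_le (by omega) ?_
    refine le_trans (Polynomial.natDegree_mul_le) ?_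
    simp
  refine le_trans (Finset.sum_le_card_nsmul _ _ 1 this) ?_
  simp [Nat.card_Ioc]

lemma natDegree_Ek (α : ℕ → ℂ) (n k : ℕ) (hk : k ≤ n) : (Ek α n k).natDegree ≤ n := by
  refine le_trans (Polynomial.natDegree_mul_le) ?_
  have h1 := natDegree_Pm α 0 k
  have h2 := natDegree_Rm α n k
  omega

lemma natDegree_Ekσ (α : ℕ → ℂ) (n k : ℕ) (hk : k ≤ n) : (Ekσ α n k).natDegree ≤ n := by
  refine le_trans (Polynomial.natDegree_mul_le) ?_
  have h1 := natDegree_Pm α k n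
  have h2 := natDegree_Rm α k 0
  omega

section evallemmas
variable {n : ℕ} {α : ℕ → ℂ} (hα : ∀ j, 1 ≤ j → j ≤ n → ‖α j‖ < 1)
variable {t : ℂ} (ht : ‖t‖ = 1)
include hα ht

lemma eval_Rm_ne_zero {k m : ℕ} (hk : k ≤ n) (hm : 1 ≤ m + 1) :
    (Rm α k m).eval t ≠ 0 := by
  rw [Rm, Polynomial.eval_prod]
  apply Finset.prod_ne_zero_iff.mpr
  intro j hj
  rw [Finset.mem_Ioc] at hj
  have hne := one_sub_ne (hα j (by omega) (by omega)) ht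
  simpa using hne

/-- `B_k(t) · Q_k(t) = P_k(t)` on the circle. -/
lemma blaschke_prod_mul {k : ℕ} (hk : k ≤ n) :
    (∏ j ∈ Finset.Icc 1 k, blaschke (α j) t) * (Rm α k 0).eval t = (Pm α 0 k).eval t := by
  have hIcc : Finset.Icc 1 k = Finset.Ioc 0 k := by
    ext x; simp [Finset.mem_Icc, Finset.mem_Ioc]; omega
  rw [hIcc, Rm, Pm, Polynomial.eval_prod, Polynomial.eval_prod, ← Finset.prod_mul_distrib]
  apply Finset.prod_congr rfl
  intro j hj
  rw [Finset.mem_Ioc] at hj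
  have hne := one_sub_ne (hα j (by omega) (by omega)) ht
  simp only [blaschke, Polynomial.eval_sub, Polynomial.eval_one, Polynomial.eval_mul,
    Polynomial.eval_C, Polynomial.eval_X]
  rw [div_mul_cancel₀]
  simpa using hne

/-- Splitting of the full denominator product. -/
lemma Rm_split {k : ℕ} (hk : k ≤ n) : Rm α n 0 = Rm α k 0 * Rm α n k := by
  rw [Rm, Rm, Rm]
  rw [← Finset.prod_Ioc_consecutive _ (Nat.zero_le k) hk]

/-- `B_k(t) · D(t) = E_k(t)` on the circle. -/
lemma blaschke_mul_D {k : ℕ} (hk : k ≤ n) :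
    (∏ j ∈ Finset.Icc 1 k, blaschke (α j) t) * (Rm α n 0).eval t = (Ek α n k).eval t := by
  rw [Rm_split hα ht hk, Polynomial.eval_mul, ← mul_assoc, blaschke_prod_mul hα ht hk, Ek,
    Polynomial.eval_mul]

/-- Conjugation identity: `conj(E_k(t)) = E^σ_k(t) · conj(t)^n`. -/
lemma conj_eval_Ek {k : ℕ} (hk : k ≤ n) :
    (starRingEnd ℂ) ((Ek α n k).eval t) = (Ekσ α n k).eval t * ((starRingEnd ℂ) t)^n := by
  have hfac1 : ∀ j : ℕ, (starRingEnd ℂ) (t - α j)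
      = (starRingEnd ℂ) t * (1 - (starRingEnd ℂ) (α j) * t) := by
    intro j
    have := circ_mul_conj ht
    rw [map_sub]
    rw [mul_sub, mul_one, mul_comm ((starRingEnd ℂ) (α j)) t, ← mul_assoc]
    rw [mul_comm ((starRingEnd ℂ) t) t, this, one_mul]
  have hfac2 : ∀ j : ℕ, (starRingEnd ℂ) (1 - (starRingEnd ℂ) (α j) * t)
      = (starRingEnd ℂ) t * (t - α j) := by
    intro j
    have := circ_mul_conj ht
    rw [map_sub, map_one, map_mul, Complex.conj_conj]
    rw [mul_sub, mul_comm ((starRingEnd ℂ) t) t, this]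
    ring
  rw [Ek, Ekσ, Polynomial.eval_mul, Polynomial.eval_mul, map_mul]
  rw [Pm, Rm, Rm, Pm, Polynomial.eval_prod, Polynomial.eval_prod, Polynomial.eval_prod,
    Polynomial.eval_prod, map_prod, map_prod]
  have h1 : (∏ j ∈ Finset.Ioc 0 k, (starRingEnd ℂ) ((X - C (α j)).eval t))
      = ((starRingEnd ℂ) t)^k * ∏ j ∈ Finset.Ioc 0 k,
          ((1:ℂ[X]) - C ((starRingEnd ℂ) (α j)) * X).eval t := by
    have hcongr : ∀ j ∈ Finset.Ioc 0 k, (starRingEnd ℂ) ((X - C (α j)).eval t)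
        = (starRingEnd ℂ) t * ((1:ℂ[X]) - C ((starRingEnd ℂ) (α j)) * X).eval t := by
      intro j _
      simp only [Polynomial.eval_sub, Polynomial.eval_X, Polynomial.eval_C, Polynomial.eval_one,
        Polynomial.eval_mul]
      exact hfac1 j
    rw [Finset.prod_congr rfl hcongr, Finset.prod_mul_distrib, Finset.prod_const, Nat.card_Ioc,
      Nat.sub_zero]
  have h2 : (∏ j ∈ Finset.Ioc k n, (starRingEnd ℂ) (((1:ℂ[X]) - C ((starRingEnd ℂ) (α j)) * X).eval t))
      = ((starRingEnd ℂ) t)^(n-k) * ∏ j ∈ Finset.Ioc k n, ((X - C (α j)).eval t) := by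
    have hcongr : ∀ j ∈ Finset.Ioc k n,
        (starRingEnd ℂ) (((1:ℂ[X]) - C ((starRingEnd ℂ) (α j)) * X).eval t)
        = (starRingEnd ℂ) t * ((X - C (α j)).eval t) := by
      intro j _
      simp only [Polynomial.eval_sub, Polynomial.eval_X, Polynomial.eval_C, Polynomial.eval_one,
        Polynomial.eval_mul]
      exact hfac2 j
    rw [Finset.prod_congr rfl hcongr, Finset.prod_mul_distrib, Finset.prod_const, Nat.card_Ioc]
  rw [h1, h2]
  have hpow : ((starRingEnd ℂ) t)^k * ((starRingEnd ℂ) t)^(n-k) = ((starRingEnd ℂ) t)^n := by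
    rw [← pow_add]; congr 1; omega
  have habc : ∀ (A B c : ℂ), c^k * c^(n-k) = c^n →
      (c^k * A) * (c^(n-k) * B) = A * B * c^n := by
    intro A B c h
    rw [← h]; ring
  exact habc _ _ _ hpow

end evallemmas

section li
variable {n : ℕ} {α : ℕ → ℂ} (hα : ∀ j, 1 ≤ j → j ≤ n → ‖α j‖ < 1)
include hα

lemma aux_li : ∀ (d m : ℕ) (c : ℕ → ℂ), m + d = n →
    (∑ k ∈ Finset.Icc m n, C (c k) * (Pm α m k * Rm α n k)) = 0 →
    ∀ k ∈ Finset.Icc m n, c k = 0 := by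
  intro d
  induction d with
  | zero =>
    intro m c hm hsum k hk
    have hmn : m = n := by omega
    rw [hmn] at hsum hk
    rw [Finset.Icc_self, Finset.mem_singleton] at hk
    rw [hk]
    rw [Finset.Icc_self, Finset.sum_singleton] at hsum
    have hP : Pm α n n = 1 := by rw [Pm, Finset.Ioc_self, Finset.prod_empty]
    have hR : Rm α n n = 1 := by rw [Rm, Finset.Ioc_self, Finset.prod_empty]
    rw [hP, hR, mul_one, mul_one] at hsum
    exact Polynomial.C_eq_zero.mp hsum
  | succ d IHd =>
    intro m c hm hsum
    have hmn : m < n := by omega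
    -- split off the m term
    have hsplit : Finset.Icc m n = insert m (Finset.Icc (m+1) n) := by
      ext x; simp [Finset.mem_Icc, Finset.mem_insert]; omega
    have hnotmem : m ∉ Finset.Icc (m+1) n := by simp
    -- evaluate at α (m+1)
    have heval := congrArg (Polynomial.eval (α (m+1))) hsum
    rw [Polynomial.eval_finset_sum] at heval
    simp only [Polynomial.eval_zero] at heval
    have hzero : ∀ k ∈ Finset.Icc (m+1) n,
        (C (c k) * (Pm α m k * Rm α n k)).eval (α (m+1)) = 0 := by
      intro k hk
      rw [Finset.mem_Icc] at hk
      have : (Pm α m k).eval (α (m+1)) = 0 := by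
        rw [Pm, Polynomial.eval_prod]
        apply Finset.prod_eq_zero (i := m+1)
        · rw [Finset.mem_Ioc]; omega
        · simp
      rw [Polynomial.eval_mul, Polynomial.eval_mul, this]
      ring
    rw [hsplit, Finset.sum_insert hnotmem, Finset.sum_congr rfl hzero] at heval
    simp only [Finset.sum_const_zero, add_zero] at heval
    have hPm : (Pm α m m).eval (α (m+1)) = 1 := by
      rw [Pm, Finset.Ioc_self, Finset.prod_empty, Polynomial.eval_one]
    have hRm : (Rm α n m).eval (α (m+1)) ≠ 0 := by
      rw [Rm, Polynomial.eval_prod]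
      apply Finset.prod_ne_zero_iff.mpr
      intro j hj
      rw [Finset.mem_Ioc] at hj
      intro h0
      simp only [Polynomial.eval_sub, Polynomial.eval_one, Polynomial.eval_mul,
        Polynomial.eval_C, Polynomial.eval_X] at h0
      have h1 : (starRingEnd ℂ) (α j) * α (m+1) = 1 := (sub_eq_zero.mp h0).symm
      have h2 := congrArg (‖·‖) h1
      rw [norm_mul, Complex.norm_conj, norm_one] at h2
      have hj1 := hα j (by omega) (by omega)
      have hm1 := hα (m+1) (by omega) (by omega)
      nlinarith [norm_nonneg (α j), norm_nonneg (α (m+1))]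
    have hcm : c m = 0 := by
      rw [Polynomial.eval_mul, Polynomial.eval_mul, hPm, Polynomial.eval_C, one_mul] at heval
      exact (mul_eq_zero.mp heval).resolve_right hRm
    -- factor out (X - C (α (m+1)))
    have hfac : ∀ k ∈ Finset.Icc (m+1) n,
        Pm α m k * Rm α n k = (X - C (α (m+1))) * (Pm α (m+1) k * Rm α n k) := by
      intro k hk
      rw [Finset.mem_Icc] at hk
      have hIoc : Finset.Ioc m k = insert (m+1) (Finset.Ioc (m+1) k) := by
        ext x; simp [Finset.mem_Ioc, Finset.mem_insert]; omega
      have hnm : (m+1) ∉ Finset.Ioc (m+1) k := by simp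
      rw [Pm, hIoc, Finset.prod_insert hnm, ← Pm]
      ring
    have hsum2 : (X - C (α (m+1)))
        * (∑ k ∈ Finset.Icc (m+1) n, C (c k) * (Pm α (m+1) k * Rm α n k)) = 0 := by
      rw [Finset.mul_sum]
      rw [hsplit, Finset.sum_insert hnotmem, hcm] at hsum
      simp only [map_zero, zero_mul, zero_add] at hsum
      rw [← hsum]
      apply Finset.sum_congr rfl
      intro k hk
      rw [hfac k hk]
      ring
    have hsum3 : (∑ k ∈ Finset.Icc (m+1) n, C (c k) * (Pm α (m+1) k * Rm α n k)) = 0 :=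
      (mul_eq_zero.mp hsum2).resolve_left (X_sub_C_ne_zero _)
    have hIH := IHd (m+1) c (by omega) hsum3
    intro k hk
    rw [Finset.mem_Icc] at hk
    by_cases hkm : k = m
    · subst hkm; exact hcm
    · exact hIH k (by rw [Finset.mem_Icc]; omega)

/-- Every polynomial of degree ≤ n is a combination of the `E_k`. -/
lemma exists_coeffs (q : ℂ[X]) (hq : q.natDegree ≤ n) :
    ∃ c : ℕ → ℂ, q = ∑ k ∈ Finset.range (n+1), C (c k) * Ek α n k := by
  set V := Polynomial.degreeLT ℂ (n+1) with hV
  have hmemE : ∀ i : Fin (n+1), Ek α n (i : ℕ) ∈ V := by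
    intro i
    rw [hV, Polynomial.mem_degreeLT]
    calc (Ek α n (i:ℕ)).degree ≤ ((Ek α n (i:ℕ)).natDegree : WithBot ℕ) :=
        Polynomial.degree_le_natDegree
      _ ≤ (n : WithBot ℕ) := by
          exact_mod_cast natDegree_Ek α n (i:ℕ) (by omega)
      _ < ((n+1 : ℕ) : WithBot ℕ) := by exact_mod_cast Nat.lt_succ_self n
  set v : Fin (n+1) → V := fun i => ⟨Ek α n (i : ℕ), hmemE i⟩ with hv
  have hrange : Finset.range (n+1) = Finset.Icc 0 n := by
    ext x; simp [Finset.mem_range, Finset.mem_Icc]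
  have hliE : LinearIndependent ℂ (fun i : Fin (n+1) => Ek α n (i : ℕ)) := by
    rw [Fintype.linearIndependent_iff]
    intro g hg i
    set c : ℕ → ℂ := fun k => if h : k < n + 1 then g ⟨k, h⟩ else 0 with hcdef
    have hsum : (∑ k ∈ Finset.Icc 0 n, C (c k) * (Pm α 0 k * Rm α n k)) = 0 := by
      rw [← hrange]
      rw [← Fin.sum_univ_eq_sum_range (fun k => C (c k) * (Pm α 0 k * Rm α n k)) (n+1)]
      rw [← hg]
      apply Finset.sum_congr rfl
      intro i _
      rw [Polynomial.smul_eq_C_mul, Ek]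
      congr 1
      rw [hcdef]
      simp [i.isLt]
    have := aux_li hα n 0 c (by omega) hsum i (by rw [Finset.mem_Icc]; omega)
    rw [hcdef] at this
    simpa [i.isLt] using this
  have hli : LinearIndependent ℂ v := by
    apply LinearIndependent.of_comp (V.subtype)
    exact hliE
  have hcard : Fintype.card (Fin (n+1)) = Module.finrank ℂ V := by
    rw [Fintype.card_fin]
    rw [(Polynomial.degreeLTEquiv ℂ (n+1)).finrank_eq, Module.finrank_fin_fun]
  have hspan := hli.span_eq_top_of_card_eq_finrank hcard
  have hqm : q ∈ V := by
    rw [hV, Polynomial.mem_degreeLT]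
    calc q.degree ≤ (q.natDegree : WithBot ℕ) := Polynomial.degree_le_natDegree
      _ ≤ (n : WithBot ℕ) := by exact_mod_cast hq
      _ < ((n+1 : ℕ) : WithBot ℕ) := by exact_mod_cast Nat.lt_succ_self n
  have hqmem : (⟨q, hqm⟩ : V) ∈ Submodule.span ℂ (Set.range v) := by
    rw [hspan]; trivial
  rw [Submodule.mem_span_range_iff_exists_fun] at hqmem
  obtain ⟨g, hgq⟩ := hqmem
  set c : ℕ → ℂ := fun k => if h : k < n + 1 then g ⟨k, h⟩ else 0 with hcdef
  refine ⟨c, ?_⟩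
  have := congrArg (Subtype.val) hgq
  push_cast at this
  rw [← this]
  rw [← Fin.sum_univ_eq_sum_range (fun k => C (c k) * Ek α n k) (n+1)]
  apply Finset.sum_congr rfl
  intro i _
  rw [Polynomial.smul_eq_C_mul]
  congr 1
  rw [hcdef]
  simp [i.isLt]

end li

/-- The central pointwise identity on the circle. -/
lemma main_identity {n : ℕ} {α : ℕ → ℂ}
    (hα : ∀ j, 1 ≤ j → j ≤ n → ‖α j‖ < 1) (a : ℕ → ℂ)
    {t : ℂ} (ht : ‖t‖ = 1) :
    ((∑ k ∈ Finset.range (n+1), C (a k) * Ek α n k) * Pm α 0 n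
      + (∑ k ∈ Finset.range (n+1), C ((starRingEnd ℂ) (a k)) * Ekσ α n k) * Rm α n 0).eval t
      * ((starRingEnd ℂ) t)^n
    = (∑ k ∈ Finset.range (n+1),
        (a k * (∏ j ∈ Finset.Icc 1 k, blaschke (α j) t)
          + (starRingEnd ℂ) (a k * ∏ j ∈ Finset.Icc 1 k, blaschke (α j) t)))
      * ((Rm α n 0).eval t * (starRingEnd ℂ) ((Rm α n 0).eval t)) := by
  have hconjD : (starRingEnd ℂ) ((Rm α n 0).eval t)
      = (Pm α 0 n).eval t * ((starRingEnd ℂ) t)^n := by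
    have h0 := conj_eval_Ek hα ht (k := 0) (Nat.zero_le n)
    have e1 : Pm α 0 0 = 1 := by rw [Pm, Finset.Ioc_self, Finset.prod_empty]
    have e2 : Rm α 0 0 = 1 := by rw [Rm, Finset.Ioc_self, Finset.prod_empty]
    rw [Ek, Ekσ, e1, e2, one_mul, one_mul] at h0
    exact h0
  have hL : ((∑ k ∈ Finset.range (n+1), C (a k) * Ek α n k) * Pm α 0 n
      + (∑ k ∈ Finset.range (n+1), C ((starRingEnd ℂ) (a k)) * Ekσ α n k) * Rm α n 0).eval t
      * ((starRingEnd ℂ) t)^n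
      = ∑ k ∈ Finset.range (n+1),
          (a k * (Ek α n k).eval t * ((Pm α 0 n).eval t * ((starRingEnd ℂ) t)^n)
            + (starRingEnd ℂ) (a k) * ((Ekσ α n k).eval t * ((starRingEnd ℂ) t)^n)
              * (Rm α n 0).eval t) := by
    rw [Polynomial.eval_add, Polynomial.eval_mul, Polynomial.eval_mul,
      Polynomial.eval_finset_sum, Polynomial.eval_finset_sum]
    simp only [Polynomial.eval_mul, Polynomial.eval_C]
    rw [add_mul, Finset.sum_mul, Finset.sum_mul, Finset.sum_mul, Finset.sum_mul,
      ← Finset.sum_add_distrib]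
    apply Finset.sum_congr rfl
    intro k _
    ring
  rw [hL, Finset.sum_mul]
  apply Finset.sum_congr rfl
  intro k hk
  rw [Finset.mem_range] at hk
  have hk' : k ≤ n := by omega
  rw [← hconjD, ← conj_eval_Ek hα ht hk', ← blaschke_mul_D hα ht hk']
  rw [map_mul, map_mul]
  ring


end FRaux

open FRaux Polynomial

theorem stmt5 (n : ℕ) (α : ℕ → ℂ)
    (hα : ∀ j, 1 ≤ j → j ≤ n → ‖α j‖ < 1)
    (hdist : ∀ j k, 1 ≤ j → j ≤ n → 1 ≤ k → k ≤ n → j ≠ k → α j ≠ α k)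
    (a : ℕ → ℂ)
    (ha : ∀ t : UnitCircle,
      0 ≤ ∑ k ∈ Finset.range (n + 1), (a k * BP α k t + (starRingEnd ℂ) (a k * BP α k t))) :
    ∃ b : ℕ → ℂ, ∀ t : UnitCircle,
      ∑ k ∈ Finset.range (n + 1), (a k * BP α k t + (starRingEnd ℂ) (a k * BP α k t))
        = ((‖∑ k ∈ Finset.range (n + 1), b k * BP α k t‖ : ℝ) : ℂ) ^ 2 := by
  classical
  set Gp : ℂ[X] := (∑ k ∈ Finset.range (n+1), C (a k) * Ek α n k) * Pm α 0 n
      + (∑ k ∈ Finset.range (n+1), C ((starRingEnd ℂ) (a k)) * Ekσ α n k) * Rm α n 0 with hGp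
  have habs : ∀ t : UnitCircle, ‖(t : ℂ)‖ = 1 := by
    intro t
    have := t.2
    rw [mem_sphere_iff_norm, sub_zero] at this
    exact this
  -- degree bound
  have hdegsum : ∀ (f : ℕ → ℂ), (∑ k ∈ Finset.range (n+1), C (f k) * Ek α n k).natDegree ≤ n := by
    intro f
    refine le_trans (Polynomial.natDegree_sum_le _ _) ?_
    rw [Finset.fold_max_le]
    refine ⟨Nat.zero_le n, fun k hk => ?_⟩
    rw [Finset.mem_range] at hk
    calc (Function.comp natDegree (fun k => C (f k) * Ek α n k) k)
        ≤ (C (f k)).natDegree + (Ek α n k).natDegree := Polynomial.natDegree_mul_le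
      _ ≤ n := by rw [Polynomial.natDegree_C]; have := natDegree_Ek α n k (by omega); omega
  have hdegsumσ : (∑ k ∈ Finset.range (n+1),
      C ((starRingEnd ℂ) (a k)) * Ekσ α n k).natDegree ≤ n := by
    refine le_trans (Polynomial.natDegree_sum_le _ _) ?_
    rw [Finset.fold_max_le]
    refine ⟨Nat.zero_le n, fun k hk => ?_⟩
    rw [Finset.mem_range] at hk
    calc (Function.comp natDegree (fun k => C ((starRingEnd ℂ) (a k)) * Ekσ α n k) k)
        ≤ (C ((starRingEnd ℂ) (a k))).natDegree + (Ekσ α n k).natDegree :=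
          Polynomial.natDegree_mul_le
      _ ≤ n := by rw [Polynomial.natDegree_C]; have := natDegree_Ekσ α n k (by omega); omega
  have hdegG : Gp.natDegree ≤ 2*n := by
    rw [hGp]
    refine le_trans (Polynomial.natDegree_add_le _ _) ?_
    refine max_le ?_ ?_
    · refine le_trans Polynomial.natDegree_mul_le ?_
      have h1 := hdegsum a
      have h2 := natDegree_Pm α 0 n
      omega
    · refine le_trans Polynomial.natDegree_mul_le ?_
      have h1 := hdegsumσ
      have h2 := natDegree_Rm α n 0
      omega
  -- positivity
  have hGpos : ∀ t : ℂ, ‖t‖ = 1 → 0 ≤ Gp.eval t * ((starRingEnd ℂ) t)^n := by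
    intro t ht
    have htmem : t ∈ Metric.sphere (0:ℂ) 1 := by
      rw [mem_sphere_iff_norm, sub_zero]
      exact ht
    set t' : UnitCircle := ⟨t, htmem⟩ with ht'
    have hS := ha t'
    have hBP : ∀ k, BP α k t' = ∏ j ∈ Finset.Icc 1 k, blaschke (α j) t := fun k => rfl
    rw [hGp, main_identity hα a ht]
    rw [Complex.mul_conj]
    apply mul_nonneg
    · exact hS
    · exact_mod_cast Complex.normSq_nonneg _
  obtain ⟨p, hpd, hpe⟩ := fejer_riesz n Gp hdegG hGpos
  obtain ⟨c, hcp⟩ := exists_coeffs hα p hpd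
  refine ⟨c, ?_⟩
  intro t
  have ht := habs t
  set tc : ℂ := (t : ℂ) with htc
  have hD0 : (Rm α n 0).eval tc ≠ 0 := eval_Rm_ne_zero hα ht le_rfl (by omega)
  have hsum_b : (∑ k ∈ Finset.range (n+1), c k * BP α k t) = p.eval tc / (Rm α n 0).eval tc := by
    rw [eq_div_iff hD0, Finset.sum_mul, hcp, Polynomial.eval_finset_sum]
    apply Finset.sum_congr rfl
    intro k hk
    rw [Finset.mem_range] at hk
    rw [Polynomial.eval_mul, Polynomial.eval_C, mul_assoc]
    congr 1
    exact blaschke_mul_D hα ht (by omega)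
  have hSid := main_identity hα a (t := tc) ht
  rw [← hGp] at hSid
  have hkey := hpe tc ht
  rw [hSid] at hkey
  rw [Complex.mul_conj, Complex.mul_conj] at hkey
  -- now hkey : S * normSq D = normSq (p.eval tc)
  have hns' : ((Complex.normSq ((Rm α n 0).eval tc) : ℝ) : ℂ) ≠ 0 := by
    simpa using (Complex.normSq_pos.mpr hD0).ne'
  have hS2 : (∑ k ∈ Finset.range (n + 1),
      (a k * BP α k t + (starRingEnd ℂ) (a k * BP α k t)))
      = ((Complex.normSq (p.eval tc) : ℝ) : ℂ)
        / ((Complex.normSq ((Rm α n 0).eval tc) : ℝ) : ℂ) := by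
    rw [eq_div_iff hns']
    exact hkey
  rw [hS2, hsum_b]
  rw [← Complex.ofReal_pow, Complex.sq_norm, Complex.normSq_div, Complex.ofReal_div]

end
end

section
/- Let (α_k)_{k≥1} be a sequence in 𝔻 with Σ_{k≥1} (1 − |α_k|) = +∞, and let B_0 = 1, B_k = ζ_1⋯ζ_k. If σ_1, σ_2 ∈ M⁺(𝕋) satisfy ∫_𝕋 B_k dσ_1 = ∫_𝕋 B_k dσ_2 for all k ≥ 0, then σ_1 = σ_2. (In particular, the spectral measure of a Blaschke varying Gaussian process is unique.) -/
open Complex MeasureTheory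

noncomputable section

open Finset
open scoped NNReal ENNReal
def eb (α t : ℂ) : ℂ := (1 - (starRingEnd ℂ) α * t) / (t - α)

lemma one_sub_ne (w : ℂ) (h : ‖w‖ < 1) : (1 : ℂ) - w ≠ 0 := by
  intro hc
  rw [sub_eq_zero] at hc
  rw [← hc] at h
  simp at h

lemma den_ne {α z : ℂ} (ha : ‖α‖ < 1) (hz : ‖z‖ ≤ 1) : (1 : ℂ) - (starRingEnd ℂ) α * z ≠ 0 := by
  apply one_sub_ne
  rw [norm_mul, RCLike.norm_conj]
  calc ‖α‖ * ‖z‖ ≤ ‖α‖ * 1 := mul_le_mul_of_nonneg_left hz (norm_nonneg _)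
    _ < 1 := by simpa using ha

lemma sub_ne_of_norm {t α : ℂ} (ht : ‖t‖ = 1) (ha : ‖α‖ < 1) : t - α ≠ 0 := by
  intro hc
  rw [sub_eq_zero] at hc
  rw [← hc, ht] at ha
  exact lt_irrefl _ ha

lemma step_id {α z t : ℂ} (hz1 : (1:ℂ) - (starRingEnd ℂ) α * z ≠ 0) (hta : t - α ≠ 0)
    (htz : t - z ≠ 0) :
    (1 - blaschke α z * eb α t) / (t - z)
      = ((starRingEnd ℂ) α + eb α t) / (1 - (starRingEnd ℂ) α * z) := by
  rw [blaschke, eb]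
  have hz1' : (1:ℂ) - z * (starRingEnd ℂ) α ≠ 0 := by rwa [mul_comm]
  field_simp
  ring

lemma telescope (α : ℕ → ℂ) (z t : ℂ) (hz : ‖z‖ < 1) (ht : ‖t‖ = 1)
    (hα : ∀ k, 1 ≤ k → ‖α k‖ < 1) (n : ℕ) :
    (1 - (∏ j ∈ Icc 1 n, blaschke (α j) z) * (∏ j ∈ Icc 1 n, eb (α j) t)) / (t - z)
      = ∑ k ∈ Icc 1 n, (∏ j ∈ Icc 1 (k-1), blaschke (α j) z) / (1 - (starRingEnd ℂ) (α k) * z) *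
          ((starRingEnd ℂ) (α k) * (∏ j ∈ Icc 1 (k-1), eb (α j) t) + ∏ j ∈ Icc 1 k, eb (α j) t) := by
  induction n with
  | zero => simp
  | succ n ih =>
    rw [Finset.prod_Icc_succ_top (by omega), Finset.prod_Icc_succ_top (by omega),
      Finset.sum_Icc_succ_top (by omega), ← ih, Finset.prod_Icc_succ_top (Nat.le_add_left 1 n)]
    simp only [Nat.add_sub_cancel]
    have ha1 : ‖α (n+1)‖ < 1 := hα (n+1) (by omega)
    have htz : t - z ≠ 0 := by
      intro hc; rw [sub_eq_zero] at hc; rw [hc] at ht; rw [ht] at hz; exact lt_irrefl _ hz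
    have hs := step_id (α := α (n+1)) (z := z) (t := t)
      (den_ne ha1 hz.le) (sub_ne_of_norm ht ha1) htz
    linear_combination ((∏ j ∈ Icc 1 n, blaschke (α j) z) * (∏ j ∈ Icc 1 n, eb (α j) t)) * hs




lemma conj_circle {t : ℂ} (ht : ‖t‖ = 1) : (starRingEnd ℂ) t * t = 1 := by
  rw [mul_comm, Complex.mul_conj]
  norm_cast
  rw [Complex.normSq_eq_norm_sq, ht]
  norm_num

lemma norm_den_eq {α t : ℂ} (ht : ‖t‖ = 1) : ‖1 - (starRingEnd ℂ) α * t‖ = ‖t - α‖ := by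
  have ht0 : t ≠ 0 := by intro hc; rw [hc] at ht; simp at ht
  have key : (1 : ℂ) - (starRingEnd ℂ) α * t = (starRingEnd ℂ) (t - α) * t := by
    rw [map_sub]
    have h3 : (starRingEnd ℂ) t * t = 1 := conj_circle ht
    linear_combination -h3
  rw [key, norm_mul, RCLike.norm_conj, ht, mul_one]

lemma norm_eb {α t : ℂ} (ht : ‖t‖ = 1) (ha : ‖α‖ < 1) : ‖eb α t‖ = 1 := by
  have h1 : t - α ≠ 0 := by
    intro hc; rw [sub_eq_zero] at hc; rw [← hc, ht] at ha; exact lt_irrefl _ ha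
  rw [eb, norm_div, norm_den_eq ht, div_self (norm_ne_zero_iff.mpr h1)]



lemma normSq_identity (α z : ℂ) :
    Complex.normSq (1 - (starRingEnd ℂ) α * z) - Complex.normSq (z - α)
      = (1 - Complex.normSq α) * (1 - Complex.normSq z) := by
  have : ((Complex.normSq (1 - (starRingEnd ℂ) α * z) : ℂ)) - (Complex.normSq (z - α) : ℂ)
      = ((1 : ℂ) - (Complex.normSq α : ℂ)) * ((1 : ℂ) - (Complex.normSq z : ℂ)) := by
    rw [← Complex.mul_conj, ← Complex.mul_conj, ← Complex.mul_conj, ← Complex.mul_conj]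
    simp only [map_sub, map_mul, map_one, Complex.conj_conj]
    ring
  exact_mod_cast this

lemma norm_blaschke_le {α z : ℂ} (ha : ‖α‖ < 1) (hz : ‖z‖ < 1) :
    ‖blaschke α z‖ ≤ Real.exp (-((1 - Complex.normSq α) * (1 - Complex.normSq z) / 8)) := by
  have hden : (1 : ℂ) - (starRingEnd ℂ) α * z ≠ 0 := by
    intro hc
    rw [sub_eq_zero] at hc
    have : ‖(1:ℂ)‖ < 1 := by
      rw [hc, norm_mul, RCLike.norm_conj]
      calc ‖α‖ * ‖z‖ ≤ 1 * ‖z‖ := mul_le_mul_of_nonneg_right ha.le (norm_nonneg _)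
        _ < 1 := by simpa using hz
    simp at this
  have hdenSq : Complex.normSq (1 - (starRingEnd ℂ) α * z) ≤ 4 := by
    have h1 : ‖(1 : ℂ) - (starRingEnd ℂ) α * z‖ ≤ 2 := by
      calc ‖(1 : ℂ) - (starRingEnd ℂ) α * z‖ ≤ ‖(1:ℂ)‖ + ‖(starRingEnd ℂ) α * z‖ := norm_sub_le _ _
        _ ≤ 1 + 1 := by
            apply add_le_add (le_of_eq (norm_one))
            rw [norm_mul, RCLike.norm_conj]
            exact le_trans (mul_le_one₀ ha.le (norm_nonneg _) hz.le) le_rfl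
        _ = 2 := by norm_num
    have := Complex.normSq_eq_norm_sq (1 - (starRingEnd ℂ) α * z)
    rw [this]
    nlinarith [norm_nonneg ((1:ℂ) - (starRingEnd ℂ) α * z)]
  have hpos : 0 < Complex.normSq (1 - (starRingEnd ℂ) α * z) := by
    rw [Complex.normSq_pos]; exact hden
  have hx0 : 0 ≤ (1 - Complex.normSq α) * (1 - Complex.normSq z) := by
    apply mul_nonneg
    · rw [Complex.normSq_eq_norm_sq]; nlinarith [norm_nonneg α]
    · rw [Complex.normSq_eq_norm_sq]; nlinarith [norm_nonneg z]
  set x := (1 - Complex.normSq α) * (1 - Complex.normSq z) with hxdef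
  have hsq : ‖blaschke α z‖^2 = Complex.normSq (z - α) / Complex.normSq (1 - (starRingEnd ℂ) α * z) := by
    rw [blaschke, norm_div, div_pow, Complex.sq_norm, Complex.sq_norm]
  have hkey : ‖blaschke α z‖^2 ≤ 1 - x / 4 := by
    rw [hsq]
    rw [div_le_iff₀ hpos]
    have hid := normSq_identity α z
    nlinarith [hdenSq, hpos, hx0]
  have hexp : (1 : ℝ) - x / 4 ≤ Real.exp (-(x/4)) := by
    have := Real.add_one_le_exp (-(x/4))
    linarith
  have h2 : ‖blaschke α z‖^2 ≤ Real.exp (-(x/4)) := le_trans hkey hexp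
  have : ‖blaschke α z‖ ≤ Real.exp (-(x/8)) := by
    nlinarith [Real.exp_nonneg (-(x/8)), norm_nonneg (blaschke α z),
      Real.exp_nonneg (-(x/4)), (by rw [← Real.exp_add]; ring_nf : Real.exp (-(x/8)) * Real.exp (-(x/8)) = Real.exp (-(x/4)))]
  simpa [neg_div] using this

lemma sum_shift (f : ℕ → ℝ) (n : ℕ) : ∑ i ∈ range n, f (i+1) = ∑ j ∈ Icc 1 n, f j := by
  induction n with
  | zero => simp
  | succ n ih => rw [Finset.sum_range_succ, Finset.sum_Icc_succ_top (by omega), ih]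

lemma prod_blaschke_tendsto (α : ℕ → ℂ) (hα : ∀ k, 1 ≤ k → ‖α k‖ < 1)
    (hdiv : ¬ Summable fun k : ℕ => 1 - ‖α (k + 1)‖) {z : ℂ} (hz : ‖z‖ < 1) :
    Filter.Tendsto (fun n => ∏ j ∈ Icc 1 n, blaschke (α j) z) Filter.atTop (nhds 0) := by
  rw [tendsto_zero_iff_norm_tendsto_zero]
  have habs : ∀ w : ℂ, ‖w‖ = ‖w‖ := fun w => rfl
  set c : ℝ := (1 - Complex.normSq z) / 8 with hc
  have hcpos : 0 < c := by
    have : Complex.normSq z < 1 := by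
      rw [Complex.normSq_eq_norm_sq]
      nlinarith [norm_nonneg z]
    rw [hc]; linarith
  have hS : Filter.Tendsto (fun n => ∑ j ∈ Icc 1 n, (1 - ‖α j‖)) Filter.atTop Filter.atTop := by
    have h0 : ∀ k : ℕ, 0 ≤ 1 - ‖α (k+1)‖ := by
      intro k
      have := hα (k+1) (by omega)
      rw [habs]
      linarith
    have h := (not_summable_iff_tendsto_nat_atTop_of_nonneg h0).mp hdiv
    have heq : (fun n => ∑ i ∈ range n, (1 - ‖α (i+1)‖))
        = fun n => ∑ j ∈ Icc 1 n, (1 - ‖α j‖) := by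
      funext n
      exact sum_shift (fun j => 1 - ‖α j‖) n
    rwa [heq] at h
  have hbound : ∀ n, ‖∏ j ∈ Icc 1 n, blaschke (α j) z‖ ≤ Real.exp (-(c * ∑ j ∈ Icc 1 n, (1 - ‖α j‖))) := by
    intro n
    rw [norm_prod]
    calc ∏ j ∈ Icc 1 n, ‖blaschke (α j) z‖
        ≤ ∏ j ∈ Icc 1 n, Real.exp (-(c * (1 - ‖α j‖))) := by
          apply Finset.prod_le_prod (fun j _ => norm_nonneg _)
          intro j hj
          have haj : ‖α j‖ < 1 := hα j (by simp at hj; omega)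
          refine le_trans (norm_blaschke_le haj hz) ?_
          rw [Real.exp_le_exp]
          have h1 : (1 - ‖α j‖) ≤ 1 - Complex.normSq (α j) := by
            rw [Complex.normSq_eq_norm_sq]
            nlinarith [norm_nonneg (α j)]
          have h2 : 0 ≤ 1 - ‖α j‖ := by linarith
          have h3 : Complex.normSq z < 1 := by
            rw [Complex.normSq_eq_norm_sq]
            nlinarith [norm_nonneg z]
          rw [hc]
          nlinarith [Complex.normSq_nonneg (α j), Complex.normSq_nonneg z]
      _ = Real.exp (-(c * ∑ j ∈ Icc 1 n, (1 - ‖α j‖))) := by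
          rw [← Real.exp_sum]
          congr 1
          rw [Finset.mul_sum]
          simp
  apply squeeze_zero (fun n => norm_nonneg _) hbound
  have h1 : Filter.Tendsto (fun n => c * ∑ j ∈ Icc 1 n, (1 - ‖α j‖)) Filter.atTop Filter.atTop :=
    hS.const_mul_atTop hcpos
  exact Real.tendsto_exp_atBot.comp (Filter.tendsto_neg_atTop_atBot.comp h1)

lemma conj_blaschke_s7 {α t : ℂ} (ht : ‖t‖ = 1) (ha : ‖α‖ < 1) :
    (starRingEnd ℂ) (blaschke α t) = eb α t := by
  have h1 : t - α ≠ 0 := sub_ne_of_norm ht ha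
  have h2 : (1 : ℂ) - (starRingEnd ℂ) α * t ≠ 0 := den_ne ha ht.le
  have h3 : (starRingEnd ℂ) t * t = 1 := conj_circle ht
  have h4 : (1 : ℂ) - α * (starRingEnd ℂ) t ≠ 0 := by
    intro hc
    apply h2
    have := congrArg (starRingEnd ℂ) hc
    simpa [map_sub, map_mul] using this
  rw [blaschke, eb, map_div₀, map_sub, map_sub, map_mul, map_one, Complex.conj_conj]
  rw [div_eq_div_iff h4 h1]
  linear_combination (1 - (starRingEnd ℂ) α * α) * h3

lemma circle_norm (t : UnitCircle) : ‖(t:ℂ)‖ = 1 := by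
  have := t.2
  rw [mem_sphere_zero_iff_norm] at this
  exact this

lemma integrable_cont {f : UnitCircle → ℂ} (hf : Continuous f) (σ : Measure UnitCircle)
    [IsFiniteMeasure σ] : Integrable f σ :=
  hf.integrable_of_hasCompactSupport (HasCompactSupport.of_compactSpace f)

lemma cont_coe : Continuous (fun t : UnitCircle => (t:ℂ)) := continuous_subtype_val

lemma cont_eb {a : ℂ} (ha : ‖a‖ < 1) : Continuous (fun t : UnitCircle => eb a (t:ℂ)) := by
  apply Continuous.div
  · exact continuous_const.sub (continuous_const.mul cont_coe)
  · exact cont_coe.sub continuous_const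
  · exact fun t => sub_ne_of_norm (circle_norm t) ha

lemma cont_E (α : ℕ → ℂ) (hα : ∀ k, 1 ≤ k → ‖α k‖ < 1) (k : ℕ) :
    Continuous (fun t : UnitCircle => ∏ j ∈ Finset.Icc 1 k, eb (α j) (t:ℂ)) := by
  apply continuous_finset_prod
  intro j hj
  exact cont_eb (hα j (by simp at hj; omega))

lemma cont_inv_sub {z : ℂ} (hz : ‖z‖ < 1) :
    Continuous (fun t : UnitCircle => ((t:ℂ) - z)⁻¹) := by
  apply Continuous.inv₀ (cont_coe.sub continuous_const)
  intro t
  exact sub_ne_of_norm (circle_norm t) hz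

lemma norm_inv_sub_le {z : ℂ} (hz : ‖z‖ < 1) (t : UnitCircle) :
    ‖((t:ℂ) - z)⁻¹‖ ≤ (1 - ‖z‖)⁻¹ := by
  rw [norm_inv]
  have h1 : 1 - ‖z‖ ≤ ‖(t:ℂ) - z‖ := by
    have := norm_sub_norm_le (t:ℂ) z
    rw [circle_norm t] at this
    linarith [abs_le.mp (abs_norm_sub_norm_le (t:ℂ) z)]
  apply inv_anti₀ (by linarith) h1

lemma norm_E_eq (α : ℕ → ℂ) (hα : ∀ k, 1 ≤ k → ‖α k‖ < 1) (k : ℕ) (t : UnitCircle) :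
    ‖∏ j ∈ Finset.Icc 1 k, eb (α j) (t:ℂ)‖ = 1 := by
  rw [norm_prod]
  apply Finset.prod_eq_one
  intro j hj
  exact norm_eb (circle_norm t) (hα j (by simp at hj; omega))

lemma E_eq_conj_BP (α : ℕ → ℂ) (hα : ∀ k, 1 ≤ k → ‖α k‖ < 1) (k : ℕ) (t : UnitCircle) :
    (∏ j ∈ Finset.Icc 1 k, eb (α j) (t:ℂ)) = (starRingEnd ℂ) (BP α k t) := by
  rw [BP, map_prod]
  apply Finset.prod_congr rfl
  intro j hj
  rw [conj_blaschke_s7 (circle_norm t) (hα j (by simp at hj; omega))]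

section main
variable (α : ℕ → ℂ) (hα : ∀ k, 1 ≤ k → ‖α k‖ < 1)
variable (σ₁ σ₂ : Measure UnitCircle) [IsFiniteMeasure σ₁] [IsFiniteMeasure σ₂]

lemma cauchy_eq
    (hα : ∀ k, 1 ≤ k → ‖α k‖ < 1)
    (hdiv : ¬ Summable fun k : ℕ => 1 - ‖α (k + 1)‖)
    (h : ∀ k : ℕ, ∫ t, BP α k t ∂σ₁ = ∫ t, BP α k t ∂σ₂)
    {z : ℂ} (hz : ‖z‖ < 1) :
    ∫ t, ((t:ℂ) - z)⁻¹ ∂σ₁ = ∫ t, ((t:ℂ) - z)⁻¹ ∂σ₂ := by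
  -- moments of E
  have hE : ∀ k, (∫ t, (∏ j ∈ Finset.Icc 1 k, eb (α j) (t:ℂ)) ∂σ₁)
      = ∫ t, (∏ j ∈ Finset.Icc 1 k, eb (α j) (t:ℂ)) ∂σ₂ := by
    intro k
    have e1 : ∀ (σ : Measure UnitCircle), (∫ t, (∏ j ∈ Finset.Icc 1 k, eb (α j) (t:ℂ)) ∂σ)
        = ∫ t, (starRingEnd ℂ) (BP α k t) ∂σ := by
      intro σ
      apply integral_congr_ae
      filter_upwards with t
      exact E_eq_conj_BP α hα k t
    rw [e1 σ₁, e1 σ₂, integral_conj, integral_conj, h k]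
  -- the key identity for each n
  have key : ∀ n : ℕ,
      (∫ t, (1 - (∏ j ∈ Finset.Icc 1 n, blaschke (α j) z)
          * (∏ j ∈ Finset.Icc 1 n, eb (α j) (t:ℂ))) / ((t:ℂ) - z) ∂σ₁)
      = ∫ t, (1 - (∏ j ∈ Finset.Icc 1 n, blaschke (α j) z)
          * (∏ j ∈ Finset.Icc 1 n, eb (α j) (t:ℂ))) / ((t:ℂ) - z) ∂σ₂ := by
    intro n
    have e2 : ∀ (σ : Measure UnitCircle) [IsFiniteMeasure σ],
        (∫ t, (1 - (∏ j ∈ Finset.Icc 1 n, blaschke (α j) z)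
            * (∏ j ∈ Finset.Icc 1 n, eb (α j) (t:ℂ))) / ((t:ℂ) - z) ∂σ)
        = ∑ k ∈ Finset.Icc 1 n, ((∏ j ∈ Finset.Icc 1 (k-1), blaschke (α j) z)
            / (1 - (starRingEnd ℂ) (α k) * z))
          * ((starRingEnd ℂ) (α k) * (∫ t, (∏ j ∈ Finset.Icc 1 (k-1), eb (α j) (t:ℂ)) ∂σ)
             + ∫ t, (∏ j ∈ Finset.Icc 1 k, eb (α j) (t:ℂ)) ∂σ) := by
      intro σ _
      rw [show (fun t : UnitCircle => (1 - (∏ j ∈ Finset.Icc 1 n, blaschke (α j) z)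
            * (∏ j ∈ Finset.Icc 1 n, eb (α j) (t:ℂ))) / ((t:ℂ) - z))
          = fun t : UnitCircle => ∑ k ∈ Finset.Icc 1 n,
              ((∏ j ∈ Finset.Icc 1 (k-1), blaschke (α j) z) / (1 - (starRingEnd ℂ) (α k) * z))
              * ((starRingEnd ℂ) (α k) * (∏ j ∈ Finset.Icc 1 (k-1), eb (α j) (t:ℂ))
                 + ∏ j ∈ Finset.Icc 1 k, eb (α j) (t:ℂ)) from
        funext fun t => telescope α z (t:ℂ) hz (circle_norm t) hα n]
      rw [integral_finset_sum]
      · apply Finset.sum_congr rfl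
        intro k hk
        rw [integral_const_mul, integral_add, integral_const_mul]
        · exact (integrable_cont (cont_E α hα (k-1)) σ).const_mul _
        · exact integrable_cont (cont_E α hα k) σ
      · intro k hk
        apply Integrable.const_mul
        apply Integrable.add
        · exact (integrable_cont (cont_E α hα (k-1)) σ).const_mul _
        · exact integrable_cont (cont_E α hα k) σ
    rw [e2 σ₁, e2 σ₂]
    apply Finset.sum_congr rfl
    intro k hk
    rw [hE (k-1), hE k]
  -- split the integrals
  have split : ∀ n : ℕ, ∀ (σ : Measure UnitCircle) [IsFiniteMeasure σ],
      (∫ t, (1 - (∏ j ∈ Finset.Icc 1 n, blaschke (α j) z)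
          * (∏ j ∈ Finset.Icc 1 n, eb (α j) (t:ℂ))) / ((t:ℂ) - z) ∂σ)
      = (∫ t, ((t:ℂ) - z)⁻¹ ∂σ) - (∏ j ∈ Finset.Icc 1 n, blaschke (α j) z)
          * ∫ t, (∏ j ∈ Finset.Icc 1 n, eb (α j) (t:ℂ)) / ((t:ℂ) - z) ∂σ := by
    intro n σ _
    rw [show (fun t : UnitCircle => (1 - (∏ j ∈ Finset.Icc 1 n, blaschke (α j) z)
          * (∏ j ∈ Finset.Icc 1 n, eb (α j) (t:ℂ))) / ((t:ℂ) - z))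
        = fun t : UnitCircle => ((t:ℂ) - z)⁻¹ - (∏ j ∈ Finset.Icc 1 n, blaschke (α j) z)
          * ((∏ j ∈ Finset.Icc 1 n, eb (α j) (t:ℂ)) / ((t:ℂ) - z)) from
      funext fun t => by rw [sub_div, mul_div_assoc, one_div]]
    rw [integral_sub, integral_const_mul]
    · exact integrable_cont (cont_inv_sub hz) σ
    · apply Integrable.const_mul
      exact integrable_cont ((cont_E α hα n).div (cont_coe.sub continuous_const)
        (fun t => sub_ne_of_norm (circle_norm t) hz)) σ
  -- conclude by letting n → ∞
  set D : ℂ := (∫ t, ((t:ℂ) - z)⁻¹ ∂σ₁) - ∫ t, ((t:ℂ) - z)⁻¹ ∂σ₂ with hD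
  set M : ℝ := (σ₁ Set.univ).toReal + (σ₂ Set.univ).toReal with hM
  have hDn : ∀ n : ℕ, ‖D‖ ≤ ‖∏ j ∈ Finset.Icc 1 n, blaschke (α j) z‖ * ((1 - ‖z‖)⁻¹ * M) := by
    intro n
    have h1 := key n
    rw [split n σ₁, split n σ₂] at h1
    have h2 : D = (∏ j ∈ Finset.Icc 1 n, blaschke (α j) z)
        * ((∫ t, (∏ j ∈ Finset.Icc 1 n, eb (α j) (t:ℂ)) / ((t:ℂ) - z) ∂σ₁)
           - ∫ t, (∏ j ∈ Finset.Icc 1 n, eb (α j) (t:ℂ)) / ((t:ℂ) - z) ∂σ₂) := by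
      rw [hD]
      linear_combination h1
    rw [h2, norm_mul]
    apply mul_le_mul_of_nonneg_left _ (norm_nonneg _)
    have hb : ∀ (σ : Measure UnitCircle) [IsFiniteMeasure σ],
        ‖∫ t, (∏ j ∈ Finset.Icc 1 n, eb (α j) (t:ℂ)) / ((t:ℂ) - z) ∂σ‖
          ≤ (1 - ‖z‖)⁻¹ * (σ Set.univ).toReal := by
      intro σ _
      have := norm_integral_le_of_norm_le_const (μ := σ)
        (f := fun t : UnitCircle => (∏ j ∈ Finset.Icc 1 n, eb (α j) (t:ℂ)) / ((t:ℂ) - z))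
        (C := (1 - ‖z‖)⁻¹) ?_
      · exact this
      · filter_upwards with t
        calc ‖(∏ j ∈ Finset.Icc 1 n, eb (α j) (t:ℂ)) / ((t:ℂ) - z)‖
            = ‖((t:ℂ) - z)⁻¹‖ := by
              rw [div_eq_mul_inv, norm_mul, norm_E_eq α hα n t, one_mul]
          _ ≤ (1 - ‖z‖)⁻¹ := norm_inv_sub_le hz t
    calc ‖(∫ t, (∏ j ∈ Finset.Icc 1 n, eb (α j) (t:ℂ)) / ((t:ℂ) - z) ∂σ₁)
           - ∫ t, (∏ j ∈ Finset.Icc 1 n, eb (α j) (t:ℂ)) / ((t:ℂ) - z) ∂σ₂‖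
        ≤ ‖∫ t, (∏ j ∈ Finset.Icc 1 n, eb (α j) (t:ℂ)) / ((t:ℂ) - z) ∂σ₁‖
          + ‖∫ t, (∏ j ∈ Finset.Icc 1 n, eb (α j) (t:ℂ)) / ((t:ℂ) - z) ∂σ₂‖ := norm_sub_le _ _
      _ ≤ (1 - ‖z‖)⁻¹ * (σ₁ Set.univ).toReal + (1 - ‖z‖)⁻¹ * (σ₂ Set.univ).toReal :=
          add_le_add (hb σ₁) (hb σ₂)
      _ = (1 - ‖z‖)⁻¹ * M := by rw [hM]; ring
  have htend : Filter.Tendsto (fun n => ‖∏ j ∈ Finset.Icc 1 n, blaschke (α j) z‖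
      * ((1 - ‖z‖)⁻¹ * M)) Filter.atTop (nhds 0) := by
    have h0 := prod_blaschke_tendsto α hα hdiv hz
    have h1 : Filter.Tendsto (fun n => ‖∏ j ∈ Finset.Icc 1 n, blaschke (α j) z‖)
        Filter.atTop (nhds 0) := by
      simpa using h0.norm
    simpa using h1.mul_const ((1 - ‖z‖)⁻¹ * M)
  have hD0 : ‖D‖ ≤ 0 := ge_of_tendsto' htend hDn
  have hDz : D = 0 := norm_le_zero_iff.mp hD0
  rw [hD] at hDz
  exact sub_eq_zero.mp hDz

end main

lemma moment_rec {t z : ℂ} (ht : ‖t‖ = 1) (hz : ‖z‖ < 1) (m : ℕ) :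
    ((starRingEnd ℂ) t)^m / (t - z)
      = ((starRingEnd ℂ) t)^(m+1) + z * (((starRingEnd ℂ) t)^(m+1) / (t - z)) := by
  have htz : t - z ≠ 0 := by
    intro hc; rw [sub_eq_zero] at hc; rw [hc] at ht; rw [ht] at hz; exact lt_irrefl _ hz
  have h3 : (starRingEnd ℂ) t * t = 1 := conj_circle ht
  field_simp
  ring_nf
  linear_combination (-((starRingEnd ℂ) t)^m) * h3

section moments
variable (α : ℕ → ℂ)
variable (σ₁ σ₂ : Measure UnitCircle) [IsFiniteMeasure σ₁] [IsFiniteMeasure σ₂]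

lemma cont_conj_pow (m : ℕ) :
    Continuous (fun t : UnitCircle => ((starRingEnd ℂ) (t:ℂ))^m) :=
  ((continuous_conj.comp cont_coe).pow m)

lemma moments_eq
    (hα : ∀ k, 1 ≤ k → ‖α k‖ < 1)
    (hdiv : ¬ Summable fun k : ℕ => 1 - ‖α (k + 1)‖)
    (h : ∀ k : ℕ, ∫ t, BP α k t ∂σ₁ = ∫ t, BP α k t ∂σ₂) :
    ∀ m : ℕ, (∫ t, ((starRingEnd ℂ) (t:ℂ))^m ∂σ₁ = ∫ t, ((starRingEnd ℂ) (t:ℂ))^m ∂σ₂)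
      ∧ (∫ t, ((t:ℂ))^m ∂σ₁ = ∫ t, ((t:ℂ))^m ∂σ₂) := by
  classical
  set Sd : ℕ → ℂ → ℂ := fun m z =>
    (∫ t, ((starRingEnd ℂ) (t:ℂ))^m / ((t:ℂ) - z) ∂σ₁)
      - ∫ t, ((starRingEnd ℂ) (t:ℂ))^m / ((t:ℂ) - z) ∂σ₂ with hSd
  set cd : ℕ → ℂ := fun m =>
    (∫ t, ((starRingEnd ℂ) (t:ℂ))^m ∂σ₁) - ∫ t, ((starRingEnd ℂ) (t:ℂ))^m ∂σ₂ with hcd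
  set M : ℝ := (σ₁ Set.univ).toReal + (σ₂ Set.univ).toReal with hM
  have hMnn : 0 ≤ M := by
    rw [hM]; positivity
  have contdiv : ∀ (m : ℕ) (z : ℂ), ‖z‖ < 1 →
      Continuous (fun t : UnitCircle => ((starRingEnd ℂ) (t:ℂ))^m / ((t:ℂ) - z)) := by
    intro m z hz
    exact (cont_conj_pow m).div (cont_coe.sub continuous_const)
      (fun t => sub_ne_of_norm (circle_norm t) hz)
  -- F1 : Sd 0 z = 0
  have F1 : ∀ z : ℂ, ‖z‖ < 1 → Sd 0 z = 0 := by
    intro z hz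
    have e : ∀ (σ : Measure UnitCircle), (∫ t, ((starRingEnd ℂ) (t:ℂ))^0 / ((t:ℂ) - z) ∂σ)
        = ∫ t, ((t:ℂ) - z)⁻¹ ∂σ := by
      intro σ
      apply integral_congr_ae
      filter_upwards with t
      rw [pow_zero, one_div]
    rw [hSd]
    simp only
    rw [e σ₁, e σ₂, cauchy_eq α σ₁ σ₂ hα hdiv h hz, sub_self]
  -- F2 : cd 0 = 0
  have F2 : cd 0 = 0 := by
    have e : ∀ (σ : Measure UnitCircle), (∫ t, ((starRingEnd ℂ) (t:ℂ))^0 ∂σ)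
        = ∫ t, BP α 0 t ∂σ := by
      intro σ
      apply integral_congr_ae
      filter_upwards with t
      rw [pow_zero, BP]
      simp
    rw [hcd]
    simp only
    rw [e σ₁, e σ₂, h 0, sub_self]
  -- F3 : recursion
  have F3 : ∀ (m : ℕ) (z : ℂ), ‖z‖ < 1 → Sd m z = cd (m+1) + z * Sd (m+1) z := by
    intro m z hz
    have e : ∀ (σ : Measure UnitCircle) [IsFiniteMeasure σ],
        (∫ t, ((starRingEnd ℂ) (t:ℂ))^m / ((t:ℂ) - z) ∂σ)
          = (∫ t, ((starRingEnd ℂ) (t:ℂ))^(m+1) ∂σ)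
            + z * ∫ t, ((starRingEnd ℂ) (t:ℂ))^(m+1) / ((t:ℂ) - z) ∂σ := by
      intro σ _
      rw [show (fun t : UnitCircle => ((starRingEnd ℂ) (t:ℂ))^m / ((t:ℂ) - z))
          = fun t : UnitCircle => ((starRingEnd ℂ) (t:ℂ))^(m+1)
              + z * (((starRingEnd ℂ) (t:ℂ))^(m+1) / ((t:ℂ) - z)) from
        funext fun t => moment_rec (circle_norm t) hz m]
      rw [integral_add, integral_const_mul]
      · exact integrable_cont (cont_conj_pow (m+1)) σ
      · exact ((integrable_cont (contdiv (m+1) z hz) σ)).const_mul z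
    rw [hSd, hcd]
    simp only
    rw [e σ₁, e σ₂]
    ring
  -- F4 : bound
  have F4 : ∀ (m : ℕ) (z : ℂ), ‖z‖ < 1 → ‖Sd m z‖ ≤ (1 - ‖z‖)⁻¹ * M := by
    intro m z hz
    have hb : ∀ (σ : Measure UnitCircle) [IsFiniteMeasure σ],
        ‖∫ t, ((starRingEnd ℂ) (t:ℂ))^m / ((t:ℂ) - z) ∂σ‖
          ≤ (1 - ‖z‖)⁻¹ * (σ Set.univ).toReal := by
      intro σ _
      apply norm_integral_le_of_norm_le_const
      filter_upwards with t
      calc ‖((starRingEnd ℂ) (t:ℂ))^m / ((t:ℂ) - z)‖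
          = ‖((t:ℂ) - z)⁻¹‖ := by
            rw [div_eq_mul_inv, norm_mul, norm_pow, RCLike.norm_conj, circle_norm t,
              one_pow, one_mul]
        _ ≤ (1 - ‖z‖)⁻¹ := norm_inv_sub_le hz t
    rw [hSd]
    simp only
    calc ‖(∫ t, ((starRingEnd ℂ) (t:ℂ))^m / ((t:ℂ) - z) ∂σ₁)
          - ∫ t, ((starRingEnd ℂ) (t:ℂ))^m / ((t:ℂ) - z) ∂σ₂‖
        ≤ ‖∫ t, ((starRingEnd ℂ) (t:ℂ))^m / ((t:ℂ) - z) ∂σ₁‖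
          + ‖∫ t, ((starRingEnd ℂ) (t:ℂ))^m / ((t:ℂ) - z) ∂σ₂‖ := norm_sub_le _ _
      _ ≤ (1 - ‖z‖)⁻¹ * (σ₁ Set.univ).toReal + (1 - ‖z‖)⁻¹ * (σ₂ Set.univ).toReal :=
          add_le_add (hb σ₁) (hb σ₂)
      _ = (1 - ‖z‖)⁻¹ * M := by rw [hM]; ring
  -- shrinkage : from vanishing of Sd m away from 0 we get cd (m+1) = 0
  have hshrink : ∀ m : ℕ, (∀ z : ℂ, ‖z‖ < 1 → z ≠ 0 → Sd m z = 0) → cd (m+1) = 0 := by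
    intro m hm
    have hbound : ∀ n : ℕ, ‖cd (m+1)‖ ≤ (1/((n:ℝ)+1)) * (2*M) := by
      intro n
      set ε : ℝ := 1/((n:ℝ)+2) with hε
      have hε0 : 0 < ε := by rw [hε]; positivity
      have hε2 : ε ≤ 1/2 := by
        rw [hε]
        rw [div_le_div_iff₀ (by positivity) (by norm_num)]
        push_cast; linarith [Nat.cast_nonneg (α := ℝ) n]
      have hεlt : ‖(ε:ℂ)‖ < 1 := by
        rw [Complex.norm_real, Real.norm_eq_abs, abs_of_pos hε0]; linarith
      have hεne : (ε:ℂ) ≠ 0 := by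
        simpa using ne_of_gt hε0
      have h1 := F3 m (ε:ℂ) hεlt
      rw [hm (ε:ℂ) hεlt hεne] at h1
      have h2 : cd (m+1) = -((ε:ℂ) * Sd (m+1) (ε:ℂ)) := by linear_combination -h1
      rw [h2, norm_neg, norm_mul, Complex.norm_real, Real.norm_eq_abs, abs_of_pos hε0]
      have h3 : ‖Sd (m+1) (ε:ℂ)‖ ≤ 2 * M := by
        refine le_trans (F4 (m+1) (ε:ℂ) hεlt) ?_
        apply mul_le_mul_of_nonneg_right _ hMnn
        rw [Complex.norm_real, Real.norm_eq_abs, abs_of_pos hε0]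
        rw [inv_le_comm₀ (by linarith) (by norm_num)]
        linarith
      calc ε * ‖Sd (m+1) (ε:ℂ)‖ ≤ ε * (2*M) := by
            exact mul_le_mul_of_nonneg_left h3 hε0.le
        _ ≤ (1/((n:ℝ)+1)) * (2*M) := by
            apply mul_le_mul_of_nonneg_right _ (by linarith)
            rw [hε, div_le_div_iff₀ (by positivity) (by positivity)]
            push_cast; linarith
    have htend : Filter.Tendsto (fun n : ℕ => (1/((n:ℝ)+1)) * (2*M)) Filter.atTop (nhds 0) := by
      simpa using tendsto_one_div_add_atTop_nhds_zero_nat.mul_const (2*M)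
    have := ge_of_tendsto' htend hbound
    exact norm_le_zero_iff.mp this
  -- main induction
  have main : ∀ m : ℕ, ∀ z : ℂ, ‖z‖ < 1 → z ≠ 0 → Sd m z = 0 := by
    intro m
    induction m with
    | zero => exact fun z hz _ => F1 z hz
    | succ m ih =>
      intro z hz hz0
      have h1 := F3 m z hz
      rw [ih z hz hz0, hshrink m ih] at h1
      have h2 : z * Sd (m+1) z = 0 := by linear_combination -h1
      rcases mul_eq_zero.mp h2 with hc | hc
      · exact absurd hc hz0
      · exact hc
  have hcdall : ∀ m : ℕ, cd m = 0 := by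
    intro m
    cases m with
    | zero => exact F2
    | succ m => exact hshrink m (main m)
  intro m
  constructor
  · have := hcdall m
    rw [hcd] at this
    simp only at this
    exact sub_eq_zero.mp this
  · have h1 : (∫ t, ((starRingEnd ℂ) (t:ℂ))^m ∂σ₁) = ∫ t, ((starRingEnd ℂ) (t:ℂ))^m ∂σ₂ := by
      have := hcdall m
      rw [hcd] at this
      simp only at this
      exact sub_eq_zero.mp this
    have e : ∀ (σ : Measure UnitCircle), (∫ t, ((t:ℂ))^m ∂σ)
        = (starRingEnd ℂ) (∫ t, ((starRingEnd ℂ) (t:ℂ))^m ∂σ) := by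
      intro σ
      rw [← integral_conj]
      apply integral_congr_ae
      filter_upwards with t
      rw [← map_pow, Complex.conj_conj]
    rw [e σ₁, e σ₂, h1]

end moments

section sw
variable (σ₁ σ₂ : Measure UnitCircle) [IsFiniteMeasure σ₁] [IsFiniteMeasure σ₂]

/-- The monomial `z^n` as a continuous map on the unit circle. -/
def mon (n : ℕ) : C(UnitCircle, ℂ) := ⟨fun t => (t:ℂ)^n, (cont_coe.pow n)⟩

/-- The monomial `conj z^n` as a continuous map on the unit circle. -/
def cmon (n : ℕ) : C(UnitCircle, ℂ) :=
  ⟨fun t => ((starRingEnd ℂ) (t:ℂ))^n, cont_conj_pow n⟩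

def Mon : Set C(UnitCircle, ℂ) := Set.range mon ∪ Set.range cmon

lemma circle_pow_mul_conj_pow (t : UnitCircle) (a b : ℕ) (hab : b ≤ a) :
    (t:ℂ)^a * ((starRingEnd ℂ) (t:ℂ))^b = (t:ℂ)^(a-b) := by
  have h1 : ((starRingEnd ℂ) (t:ℂ))^b * ((t:ℂ))^b = 1 := by
    rw [← mul_pow, conj_circle (circle_norm t), one_pow]
  have key : (t:ℂ)^a * ((starRingEnd ℂ) (t:ℂ))^b
      = (t:ℂ)^(a-b) * (((starRingEnd ℂ) (t:ℂ))^b * (t:ℂ)^b) := by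
    rw [← mul_assoc, mul_comm ((t:ℂ)^(a-b)) _, mul_assoc, ← pow_add, Nat.sub_add_cancel hab,
      mul_comm]
  rw [key, h1, mul_one]

lemma circle_conj_pow_mul_pow (t : UnitCircle) (a b : ℕ) (hab : b ≤ a) :
    ((starRingEnd ℂ) (t:ℂ))^a * ((t:ℂ))^b = ((starRingEnd ℂ) (t:ℂ))^(a-b) := by
  have h1 : ((t:ℂ))^b * ((starRingEnd ℂ) (t:ℂ))^b = 1 := by
    rw [← mul_pow, mul_comm, conj_circle (circle_norm t), one_pow]
  have key : ((starRingEnd ℂ) (t:ℂ))^a * ((t:ℂ))^b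
      = ((starRingEnd ℂ) (t:ℂ))^(a-b) * (((t:ℂ))^b * ((starRingEnd ℂ) (t:ℂ))^b) := by
    rw [← mul_assoc, mul_comm (((starRingEnd ℂ) (t:ℂ))^(a-b)) _, mul_assoc, ← pow_add,
      Nat.sub_add_cancel hab, mul_comm]
  rw [key, h1, mul_one]

lemma Mon_mul (f g : C(UnitCircle, ℂ)) (hf : f ∈ Mon) (hg : g ∈ Mon) : f * g ∈ Mon := by
  rcases hf with ⟨a, rfl⟩ | ⟨a, rfl⟩ <;> rcases hg with ⟨b, rfl⟩ | ⟨b, rfl⟩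
  · left; exact ⟨a + b, by ext t; simp [mon, pow_add]⟩
  · rcases le_total b a with hab | hab
    · left
      refine ⟨a - b, ?_⟩
      ext t
      simp only [cmon, mon, ContinuousMap.coe_mk, ContinuousMap.mul_apply]
      exact (circle_pow_mul_conj_pow t a b hab).symm
    · right
      refine ⟨b - a, ?_⟩
      ext t
      simp only [cmon, mon, ContinuousMap.coe_mk, ContinuousMap.mul_apply]
      rw [mul_comm]
      exact (circle_conj_pow_mul_pow t b a hab).symm
  · rcases le_total b a with hab | hab
    · right
      refine ⟨a - b, ?_⟩
      ext t
      simp only [cmon, mon, ContinuousMap.coe_mk, ContinuousMap.mul_apply]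
      exact (circle_conj_pow_mul_pow t a b hab).symm
    · left
      refine ⟨b - a, ?_⟩
      ext t
      simp only [cmon, mon, ContinuousMap.coe_mk, ContinuousMap.mul_apply]
      rw [mul_comm]
      exact (circle_pow_mul_conj_pow t b a hab).symm
  · right; exact ⟨a + b, by ext t; simp [cmon, pow_add]⟩

def Wspan : Submodule ℂ C(UnitCircle, ℂ) := Submodule.span ℂ Mon

lemma Wspan_mul {f g : C(UnitCircle, ℂ)} (hf : f ∈ Wspan) (hg : g ∈ Wspan) : f * g ∈ Wspan := by
  induction hf using Submodule.span_induction with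
  | mem x hx =>
    induction hg using Submodule.span_induction with
    | mem y hy => exact Submodule.subset_span (Mon_mul _ _ hx hy)
    | zero => simpa using Submodule.zero_mem Wspan
    | add y z _ _ hy hz => rw [mul_add]; exact Submodule.add_mem _ hy hz
    | smul c y _ hy => rw [mul_smul_comm]; exact Submodule.smul_mem _ c hy
  | zero => simpa using Submodule.zero_mem Wspan
  | add x y _ _ hx hy => rw [add_mul]; exact Submodule.add_mem _ hx hy
  | smul c x _ hx => rw [smul_mul_assoc]; exact Submodule.smul_mem _ c hx

lemma Wspan_star {f : C(UnitCircle, ℂ)} (hf : f ∈ Wspan) : star f ∈ Wspan := by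
  induction hf using Submodule.span_induction with
  | mem x hx =>
    apply Submodule.subset_span
    rcases hx with ⟨a, rfl⟩ | ⟨a, rfl⟩
    · right
      refine ⟨a, ?_⟩
      ext t
      simp [cmon, mon, map_pow]
    · left
      refine ⟨a, ?_⟩
      ext t
      simp [cmon, mon, map_pow]
  | zero => simpa using Submodule.zero_mem Wspan
  | add x y _ _ hx hy => rw [star_add]; exact Submodule.add_mem _ hx hy
  | smul c x _ hx => rw [star_smul]; exact Submodule.smul_mem _ ((starRingEnd ℂ) c) hx

lemma starClosure_le_Wspan :
    ∀ f ∈ (polynomialFunctions (Metric.sphere (0:ℂ) 1)).starClosure, f ∈ Wspan := by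
  intro f hf
  rw [polynomialFunctions.starClosure_eq_adjoin_X] at hf
  induction hf using StarAlgebra.adjoin_induction with
  | mem x hx =>
    rw [Set.mem_singleton_iff] at hx
    subst hx
    apply Submodule.subset_span
    left
    refine ⟨1, ?_⟩
    ext t
    simp [mon]
  | algebraMap r =>
    have : (algebraMap ℂ C(UnitCircle, ℂ)) r = r • mon 0 := by
      ext t
      simp [mon, Algebra.algebraMap_eq_smul_one]
    rw [this]
    exact Submodule.smul_mem _ r (Submodule.subset_span (Or.inl ⟨0, rfl⟩))
  | add x y _ _ hx hy => exact Submodule.add_mem _ hx hy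
  | mul x y _ _ hx hy => exact Wspan_mul hx hy
  | star x _ hx => exact Wspan_star hx

lemma integral_eq_on_Wspan
    (hmom : ∀ m : ℕ, (∫ t, ((starRingEnd ℂ) (t:ℂ))^m ∂σ₁ = ∫ t, ((starRingEnd ℂ) (t:ℂ))^m ∂σ₂)
      ∧ (∫ t, ((t:ℂ))^m ∂σ₁ = ∫ t, ((t:ℂ))^m ∂σ₂)) :
    ∀ f ∈ Wspan, ∫ t, f t ∂σ₁ = ∫ t, f t ∂σ₂ := by
  intro f hf
  induction hf using Submodule.span_induction with
  | mem x hx =>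
    rcases hx with ⟨a, rfl⟩ | ⟨a, rfl⟩
    · exact (hmom a).2
    · exact (hmom a).1
  | zero => simp
  | add x y _ _ hx hy =>
    have i1 : ∀ (σ : Measure UnitCircle) [IsFiniteMeasure σ], ∫ t, (x + y) t ∂σ
        = (∫ t, x t ∂σ) + ∫ t, y t ∂σ := by
      intro σ _
      simp only [ContinuousMap.add_apply]
      exact integral_add (integrable_cont x.continuous σ) (integrable_cont y.continuous σ)
    rw [i1 σ₁, i1 σ₂, hx, hy]
  | smul c x _ hx =>
    have i1 : ∀ (σ : Measure UnitCircle), ∫ t, (c • x) t ∂σ = c * ∫ t, x t ∂σ := by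
      intro σ
      simp only [ContinuousMap.smul_apply, smul_eq_mul]
      exact integral_const_mul c _
    rw [i1 σ₁, i1 σ₂, hx]

lemma integral_eq_all
    (hmom : ∀ m : ℕ, (∫ t, ((starRingEnd ℂ) (t:ℂ))^m ∂σ₁ = ∫ t, ((starRingEnd ℂ) (t:ℂ))^m ∂σ₂)
      ∧ (∫ t, ((t:ℂ))^m ∂σ₁ = ∫ t, ((t:ℂ))^m ∂σ₂))
    (f : C(UnitCircle, ℂ)) : ∫ t, f t ∂σ₁ = ∫ t, f t ∂σ₂ := by
  have hdense := polynomialFunctions.starClosure_topologicalClosure (Metric.sphere (0:ℂ) 1)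
  have hmem : f ∈ ((polynomialFunctions (Metric.sphere (0:ℂ) 1)).starClosure.topologicalClosure :
      StarSubalgebra ℂ C(UnitCircle, ℂ)) := by
    rw [hdense]; trivial
  have hcl : f ∈ closure ((polynomialFunctions (Metric.sphere (0:ℂ) 1)).starClosure :
      Set C(UnitCircle, ℂ)) := hmem
  obtain ⟨g, hg_mem, hg_tend⟩ := mem_closure_iff_seq_limit.mp hcl
  have hgint : ∀ n, ∫ t, (g n) t ∂σ₁ = ∫ t, (g n) t ∂σ₂ := fun n =>
    integral_eq_on_Wspan σ₁ σ₂ hmom _ (starClosure_le_Wspan _ (hg_mem n))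
  have hconv : ∀ (σ : Measure UnitCircle) [IsFiniteMeasure σ],
      Filter.Tendsto (fun n => ∫ t, (g n) t ∂σ) Filter.atTop (nhds (∫ t, f t ∂σ)) := by
    intro σ _
    rw [tendsto_iff_norm_sub_tendsto_zero]
    apply squeeze_zero (fun n => norm_nonneg _)
      (g := fun n => dist (g n) f * (σ Set.univ).toReal)
    · intro n
      have : (∫ t, (g n) t ∂σ) - ∫ t, f t ∂σ = ∫ t, ((g n) t - f t) ∂σ := by
        rw [integral_sub (integrable_cont (g n).continuous σ) (integrable_cont f.continuous σ)]
      rw [this]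
      apply norm_integral_le_of_norm_le_const
      filter_upwards with t
      rw [← dist_eq_norm]
      exact ContinuousMap.dist_apply_le_dist t
    · have hd : Filter.Tendsto (fun n => dist (g n) f) Filter.atTop (nhds 0) :=
        tendsto_iff_dist_tendsto_zero.mp hg_tend
      simpa using hd.mul_const ((σ Set.univ).toReal)
  have := tendsto_nhds_unique
    (by simpa [funext hgint] using hconv σ₁ : Filter.Tendsto (fun n => ∫ t, (g n) t ∂σ₂)
      Filter.atTop (nhds (∫ t, f t ∂σ₁)))
    (hconv σ₂)
  exact this

end sw

theorem stmt7 (α : ℕ → ℂ) (hα : ∀ k, 1 ≤ k → ‖α k‖ < 1)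
    (hdiv : ¬ Summable fun k : ℕ => 1 - ‖α (k + 1)‖)
    (σ₁ σ₂ : Measure UnitCircle) [IsFiniteMeasure σ₁] [IsFiniteMeasure σ₂]
    (h : ∀ k : ℕ, ∫ t, BP α k t ∂σ₁ = ∫ t, BP α k t ∂σ₂) :
    σ₁ = σ₂ := by
  have hα' : ∀ k, 1 ≤ k → ‖α k‖ < 1 := by
    intro k hk
    exact hα k hk
  have hmom := moments_eq α σ₁ σ₂ hα' hdiv h
  apply ext_of_forall_lintegral_eq_of_IsFiniteMeasure
  intro f
  have hcont : Continuous (fun t : UnitCircle => (((f t : ℝ≥0) : ℝ) : ℂ)) :=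
    Complex.continuous_ofReal.comp (NNReal.continuous_coe.comp f.continuous)
  have hC : ∫ t, (((f t : ℝ≥0) : ℝ) : ℂ) ∂σ₁ = ∫ t, (((f t : ℝ≥0) : ℝ) : ℂ) ∂σ₂ := by
    have := integral_eq_all σ₁ σ₂ hmom ⟨fun t => (((f t : ℝ≥0) : ℝ) : ℂ), hcont⟩
    simpa using this
  have hR : ∫ t, ((f t : ℝ≥0) : ℝ) ∂σ₁ = ∫ t, ((f t : ℝ≥0) : ℝ) ∂σ₂ := by
    have h1 : ∀ (σ : Measure UnitCircle), (∫ t, (((f t : ℝ≥0) : ℝ) : ℂ) ∂σ)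
        = ((∫ t, ((f t : ℝ≥0) : ℝ) ∂σ : ℝ) : ℂ) := by
      intro σ
      exact integral_ofReal
    rw [h1 σ₁, h1 σ₂] at hC
    exact_mod_cast hC
  have e1 := BoundedContinuousFunction.toReal_lintegral_coe_eq_integral f σ₁
  have e2 := BoundedContinuousFunction.toReal_lintegral_coe_eq_integral f σ₂
  have fin1 : (∫⁻ x, f x ∂σ₁) ≠ ⊤ := (BoundedContinuousFunction.lintegral_lt_top_of_nnreal σ₁ f).ne
  have fin2 : (∫⁻ x, f x ∂σ₂) ≠ ⊤ := (BoundedContinuousFunction.lintegral_lt_top_of_nnreal σ₂ f).ne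
  apply (ENNReal.toReal_eq_toReal_iff' fin1 fin2).mp
  rw [e1, e2]
  exact hR

end
end
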